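/- arXiv:2405.03477 — 11 statements merged into one kernel-verified Lean document; each statement's English description precedes it below -/
import Mathlib

section
/- For every n ≥ 1, the number of compositions of n with all parts odd equals the number of compositions of n+1 with all parts greater than 1. -/
/-!
Both sides are Fibonacci numbers. If the admissible parts form an arithmetic progression
`m, m + d, m + 2d, …` with `m, d > 0`, a composition of `N` either starts with the part `m`,
which can be removed, or its first part can be lowered by `d`; hence
`c (N) = c (N - m) + c (N - d)`. Odd parts are the case `(m, d) = (1, 2)` and parts `> 1` the case
`(m, d) = (2, 1)`, so both counts satisfy the Fibonacci recurrence, and the initial values give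
`c_odd (n) = F n = c_{>1} (n + 1)`.
-/

abbrev RestrictedComposition (P : ℕ → Prop) (n : ℕ) : Type :=
  {l : List ℕ // l.sum = n ∧ ∀ x ∈ l, P x}

namespace RestrictedComposition

variable {P : ℕ → Prop}

def compositionEquiv (hP : ∀ x, P x → 0 < x) (n : ℕ) :
    {c : Composition n // ∀ x ∈ c.blocks, P x} ≃ RestrictedComposition P n where
  toFun c := ⟨c.1.blocks, c.1.blocks_sum, c.2⟩
  invFun l := ⟨⟨l.1, fun hx => hP _ (l.2.2 _ hx), l.2.1⟩, l.2.2⟩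
  left_inv _ := rfl
  right_inv _ := rfl

theorem finite (hP : ∀ x, P x → 0 < x) (n : ℕ) : Finite (RestrictedComposition P n) :=
  .of_equiv _ (compositionEquiv hP n)

section ArithmeticProgression

-- `hP` says that `P` holds exactly on the progression `m, m + d, m + 2d, …` (when `d > 0`).
variable {m d : ℕ} (hP : ∀ x, P x ↔ x = m ∨ m + d ≤ x ∧ P (x - d)) (hm : 0 < m)

def consMin (n : ℕ) (t : RestrictedComposition P (n + d)) :
    RestrictedComposition P (n + m + d) :=
  ⟨m :: t.1, by rw [List.sum_cons, t.2.1]; omega,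
    List.forall_mem_cons.2 ⟨(hP m).2 (.inl rfl), t.2.2⟩⟩

def raiseHead (n : ℕ) : RestrictedComposition P (n + m) → RestrictedComposition P (n + m + d)
  | ⟨a :: t, hsum, hl⟩ => ⟨(a + d) :: t, by rw [List.sum_cons] at hsum ⊢; omega, by
      rw [List.forall_mem_cons] at hl ⊢
      refine ⟨(hP _).2 (.inr ⟨?_, by simpa using hl.1⟩), hl.2⟩
      rcases (hP a).1 hl.1 with rfl | h <;> omega⟩
  | ⟨[], hsum, _⟩ => absurd hsum (by rw [List.sum_nil]; omega)

theorem consMin_injective (n : ℕ) : Function.Injective (consMin hP n) := by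
  rintro ⟨t, _⟩ ⟨t', _⟩ h
  simpa [consMin] using h

theorem raiseHead_injective (n : ℕ) : Function.Injective (raiseHead hP hm n) := by
  rintro ⟨_ | ⟨a, t⟩, hsum, _⟩ ⟨_ | ⟨a', t'⟩, hsum', _⟩ h
  all_goals simp only [List.sum_cons, List.sum_nil] at hsum hsum'
  all_goals try omega
  simpa [raiseHead] using h

theorem consMin_ne_raiseHead (hd : 0 < d) (n : ℕ) (t : RestrictedComposition P (n + d))
    (l : RestrictedComposition P (n + m)) : consMin hP n t ≠ raiseHead hP hm n l := by
  obtain ⟨_ | ⟨a, l⟩, hsum, hl⟩ := l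
  · rw [List.sum_nil] at hsum; omega
  rcases (hP a).1 (hl a List.mem_cons_self) with rfl | h <;>
    simp only [consMin, raiseHead, ne_eq, Subtype.mk.injEq, List.cons.injEq, not_and] <;> omega

theorem consMin_or_raiseHead_surjective (n : ℕ) :
    Function.Surjective (Sum.elim (consMin hP n) (raiseHead hP hm n)) := by
  rintro ⟨_ | ⟨a, t⟩, hsum, hl⟩
  · rw [List.sum_nil] at hsum; omega
  rw [List.sum_cons] at hsum
  rw [List.forall_mem_cons] at hl
  rcases (hP a).1 hl.1 with rfl | ⟨ha, hPa⟩
  · exact ⟨.inl ⟨t, by omega, hl.2⟩, rfl⟩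
  · refine ⟨.inr ⟨(a - d) :: t, by rw [List.sum_cons]; omega,
      List.forall_mem_cons.2 ⟨hPa, hl.2⟩⟩, ?_⟩
    simp only [Sum.elim_inr, raiseHead, Subtype.mk.injEq, List.cons.injEq, and_true]
    omega

noncomputable def sumEquiv (hd : 0 < d) (n : ℕ) :
    RestrictedComposition P (n + d) ⊕ RestrictedComposition P (n + m) ≃
      RestrictedComposition P (n + m + d) :=
  .ofBijective _ ⟨(consMin_injective hP n).sumElim (raiseHead_injective hP hm n)
    (consMin_ne_raiseHead hP hm hd n), consMin_or_raiseHead_surjective hP hm n⟩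

end ArithmeticProgression

theorem card_add_add {m d : ℕ} (hP : ∀ x, P x ↔ x = m ∨ m + d ≤ x ∧ P (x - d)) (hm : 0 < m)
    (hd : 0 < d) (n : ℕ) :
    Nat.card (RestrictedComposition P (n + m + d)) =
      Nat.card (RestrictedComposition P (n + d)) + Nat.card (RestrictedComposition P (n + m)) := by
  have hpos (x : ℕ) (hx : P x) : 0 < x := by rcases (hP x).1 hx with rfl | h <;> omega
  have := finite hpos (n + d)
  have := finite hpos (n + m)
  rw [← Nat.card_congr (sumEquiv hP hm hd n), Nat.card_sum]

end RestrictedComposition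

theorem Nat.eq_fib_add_of_recurrence {f : ℕ → ℕ} (k : ℕ) (h₀ : f 0 = fib k)
    (h₁ : f 1 = fib (k + 1)) (h : ∀ n, f (n + 2) = f n + f (n + 1)) (n : ℕ) :
    f n = fib (n + k) := by
  induction n using Nat.twoStepInduction with
  | zero => simpa using h₀
  | one => rwa [add_comm]
  | more n ih₀ ih₁ =>
    rw [h, ih₀, ih₁, show n + 2 + k = n + k + 2 by omega, fib_add_two, add_right_comm]

open RestrictedComposition

theorem Nat.odd_iff_eq_one_or (x : ℕ) : Odd x ↔ x = 1 ∨ 1 + 2 ≤ x ∧ Odd (x - 2) := by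
  simp only [Nat.odd_iff]
  omega

theorem Nat.one_lt_iff_eq_two_or (x : ℕ) : 1 < x ↔ x = 2 ∨ 2 + 1 ≤ x ∧ 1 < x - 1 := by
  omega

theorem card_restrictedComposition_odd (n : ℕ) :
    Nat.card (RestrictedComposition Odd (n + 1)) = Nat.fib (n + 1) := by
  refine Nat.eq_fib_add_of_recurrence (f := fun n ↦ Nat.card (RestrictedComposition Odd (n + 1)))
    1 ?_ ?_ (fun n ↦ (card_add_add Nat.odd_iff_eq_one_or one_pos two_pos n).trans (add_comm ..)) n
  · refine Nat.card_eq_one_iff_exists.2 ⟨⟨[1], by simp, by simp⟩, ?_⟩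
    rintro ⟨_ | ⟨a, _ | ⟨b, t⟩⟩, hsum, hl⟩ <;> simp [Nat.odd_iff] at hsum hl ⊢ <;> omega
  · refine Nat.card_eq_one_iff_exists.2 ⟨⟨[1, 1], by simp, by simp⟩, ?_⟩
    rintro ⟨_ | ⟨a, _ | ⟨b, _ | ⟨c, t⟩⟩⟩, hsum, hl⟩ <;>
      simp [Nat.odd_iff] at hsum hl ⊢ <;> omega

theorem card_restrictedComposition_one_lt (n : ℕ) :
    Nat.card (RestrictedComposition (1 < ·) (n + 1)) = Nat.fib n := by
  refine Nat.eq_fib_add_of_recurrence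
    (f := fun n ↦ Nat.card (RestrictedComposition (1 < ·) (n + 1)))
    0 ?_ ?_ (card_add_add Nat.one_lt_iff_eq_two_or two_pos one_pos) n
  · refine Nat.card_eq_zero.2 (.inl ⟨?_⟩)
    rintro ⟨_ | ⟨a, t⟩, hsum, hl⟩ <;> simp at hsum hl
    omega
  · refine Nat.card_eq_one_iff_exists.2 ⟨⟨[2], by simp, by simp⟩, ?_⟩
    rintro ⟨_ | ⟨a, _ | ⟨b, t⟩⟩, hsum, hl⟩ <;> simp at hsum hl ⊢ <;> omega

/-- The number of compositions of `n` with all parts odd equals the number of compositions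
of `n+1` with all parts greater than one. -/
theorem compositions_odd_eq_compositions_gt_one (n : ℕ) (hn : 1 ≤ n) :
    Nat.card {c : Composition n // ∀ x ∈ c.blocks, Odd x} =
      Nat.card {c : Composition (n + 1) // ∀ x ∈ c.blocks, 1 < x} := by
  obtain ⟨k, rfl⟩ := Nat.exists_eq_add_of_le' hn
  rw [Nat.card_congr (compositionEquiv (fun _ ↦ Odd.pos) _),
    Nat.card_congr (compositionEquiv (fun _ ↦ Nat.zero_lt_of_lt) _),
    card_restrictedComposition_odd, card_restrictedComposition_one_lt]
end

section
/- For integers k ≥ 1 and n ≥ 1, the number of compositions of n with all parts congruent to 1 modulo k equals the number of compositions of n + k - 1 with all parts at least k. -/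
/-!
A word `w` over `Bool` is determined by the lengths `j₀, …, jᵣ` of its maximal runs of `true`,
where `r` is the number of `false`s. Reading each `j` as the part `1 + k * j` gives a composition
of `count false w + 1 + k * count true w` into parts `≡ 1 [MOD k]`; reading it as the part `k + j`
gives a composition of `k * (count false w + 1) + count true w` into parts `≥ k`, and both readings
are bijective. Exchanging the two letters of `w` therefore matches compositions of `n` of the first
kind with compositions of `n + k - 1` of the second.
-/

/-- `runLengths (true^j₀ false true^j₁ … false true^jᵣ) = [j₀, j₁, …, jᵣ]`. -/
def runLengths : List Bool → List ℕ
  | [] => [0]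
  | false :: w => 0 :: runLengths w
  | true :: w => (runLengths w).modifyHead (· + 1)

def ofRunLengths : List ℕ → List Bool
  | [] => []
  | [j] => List.replicate j true
  | j :: l@(_ :: _) => List.replicate j true ++ false :: ofRunLengths l

theorem runLengths_ne_nil (w : List Bool) : runLengths w ≠ [] := by
  induction w with
  | nil => simp [runLengths]
  | cons b w ih => cases b <;> simp [runLengths, ih]

theorem exists_runLengths_eq_cons (w : List Bool) : ∃ j l, runLengths w = j :: l :=
  List.exists_cons_of_ne_nil (runLengths_ne_nil w)

theorem length_runLengths (w : List Bool) : (runLengths w).length = w.count false + 1 := by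
  induction w with
  | nil => rfl
  | cons b w ih =>
    obtain ⟨j, l, hw⟩ := exists_runLengths_eq_cons w
    cases b <;> simp_all [runLengths]

theorem sum_runLengths (w : List Bool) : (runLengths w).sum = w.count true := by
  induction w with
  | nil => rfl
  | cons b w ih =>
    obtain ⟨j, l, hw⟩ := exists_runLengths_eq_cons w
    cases b
    · simpa [runLengths] using ih
    · simp only [runLengths, hw, List.modifyHead_cons, List.sum_cons, List.count_cons_self]
      rw [← ih, hw, List.sum_cons]
      omega

theorem ofRunLengths_succ_cons (j : ℕ) (l : List ℕ) :
    ofRunLengths ((j + 1) :: l) = true :: ofRunLengths (j :: l) := by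
  cases l <;> simp [ofRunLengths, List.replicate_succ]

theorem ofRunLengths_runLengths (w : List Bool) : ofRunLengths (runLengths w) = w := by
  induction w with
  | nil => simp [runLengths, ofRunLengths]
  | cons b w ih =>
    obtain ⟨j, l, hw⟩ := exists_runLengths_eq_cons w
    cases b
    · simpa [runLengths, hw, ofRunLengths] using ih
    · simpa [runLengths, hw, ofRunLengths_succ_cons] using ih

theorem runLengths_replicate_true (j : ℕ) : runLengths (List.replicate j true) = [j] := by
  induction j with
  | zero => rfl
  | succ j ih => simp [List.replicate_succ, runLengths, ih]

theorem runLengths_replicate_true_append (j : ℕ) {w : List Bool} {i : ℕ} {l : List ℕ}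
    (hw : runLengths w = i :: l) :
    runLengths (List.replicate j true ++ w) = (i + j) :: l := by
  induction j with
  | zero => simpa using hw
  | succ j ih => simp [List.replicate_succ, runLengths, ih, Nat.add_assoc]

theorem runLengths_ofRunLengths {l : List ℕ} (hl : l ≠ []) :
    runLengths (ofRunLengths l) = l := by
  induction l with
  | nil => contradiction
  | cons j l ih =>
    cases l with
    | nil => simpa [ofRunLengths] using runLengths_replicate_true j
    | cons i l =>
      have hfalse : runLengths (false :: ofRunLengths (i :: l)) = 0 :: i :: l := by
        simp [runLengths, ih]
      simpa [ofRunLengths] using runLengths_replicate_true_append j hfalse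

def runLengthsEquiv : List Bool ≃ {l : List ℕ // l ≠ []} where
  toFun w := ⟨runLengths w, runLengths_ne_nil w⟩
  invFun l := ofRunLengths l
  left_inv := ofRunLengths_runLengths
  right_inv l := Subtype.ext (runLengths_ofRunLengths l.2)

theorem card_lists_eq_card_words (P : ℕ → ℕ → Prop) (hP : ¬ P 0 0) :
    Nat.card {l : List ℕ // P l.length l.sum} =
      Nat.card {w : List Bool // P (w.count false + 1) (w.count true)} := by
  have hne : ∀ {l : List ℕ}, P l.length l.sum → l ≠ [] := by
    rintro l hl rfl
    exact hP hl
  refine Nat.card_congr ((Equiv.subtypeSubtypeEquivSubtype hne).symm.trans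
    (Equiv.subtypeEquiv runLengthsEquiv.symm fun l => ?_))
  simp only [runLengthsEquiv, Equiv.coe_fn_symm_mk, runLengths_ofRunLengths l.2,
    ← length_runLengths, ← sum_runLengths]

theorem List.count_map_boolNot (w : List Bool) (b : Bool) :
    (w.map Equiv.boolNot).count b = w.count (!b) := by
  simpa using List.count_map_of_injective w _ Equiv.boolNot.injective (!b)

theorem List.sum_map_add_mul (a d : ℕ) (l : List ℕ) :
    (l.map (a + d * ·)).sum = a * l.length + d * l.sum := by
  induction l with
  | nil => simp
  | cons j l ih => simp only [List.map_cons, List.sum_cons, List.length_cons, ih]; ring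

theorem card_compositions_ap_blocks (a d n : ℕ) (ha : 0 < a) (hd : 0 < d) :
    Nat.card {c : Composition n // ∀ x ∈ c.blocks, ∃ j, x = a + d * j} =
      Nat.card {l : List ℕ // a * l.length + d * l.sum = n} := by
  have hinj : Function.Injective (a + d * ·) := fun i j hij =>
    Nat.eq_of_mul_eq_mul_left hd (Nat.add_left_cancel hij)
  have hmem (l : List ℕ) : ∀ x ∈ l.map (a + d * ·), ∃ j, x = a + d * j := by
    simp only [List.mem_map]
    rintro _ ⟨j, -, rfl⟩
    exact ⟨j, rfl⟩
  let toComp (l : {l : List ℕ // a * l.length + d * l.sum = n}) :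
      {c : Composition n // ∀ x ∈ c.blocks, ∃ j, x = a + d * j} :=
    ⟨⟨l.1.map (a + d * ·), fun hx => by obtain ⟨j, rfl⟩ := hmem l.1 _ hx; omega,
      by rw [List.sum_map_add_mul, l.2]⟩, hmem l.1⟩
  have : CanLift ℕ ℕ (a + d * ·) (fun x => ∃ j, x = a + d * j) :=
    ⟨fun _ ⟨j, hj⟩ => ⟨j, hj.symm⟩⟩
  refine (Nat.card_congr (Equiv.ofBijective toComp ⟨fun l l' h => ?_, fun c => ?_⟩)).symm
  · exact Subtype.ext (List.map_injective_iff.mpr hinj (congrArg (·.1.blocks) h))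
  · obtain ⟨l, hl⟩ := CanLift.prf (coe := List.map (a + d * ·)) c.1.blocks c.2
    refine ⟨⟨l, ?_⟩, Subtype.ext (Composition.ext hl)⟩
    rw [← List.sum_map_add_mul, hl, c.1.blocks_sum]

theorem Nat.modEq_iff_exists_eq_add_mul {a d x : ℕ} (h : a ≤ x) :
    x ≡ a [MOD d] ↔ ∃ j, x = a + d * j := by
  rw [Nat.ModEq.comm, Nat.modEq_iff_dvd' h]
  constructor
  · rintro ⟨j, hj⟩
    exact ⟨j, by omega⟩
  · rintro ⟨j, rfl⟩
    exact ⟨j, by omega⟩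

/-- Munagi's theorem: the number of compositions of `n` with all parts congruent to `1`
modulo `k` equals the number of compositions of `n + k - 1` with all parts at least `k`. -/
theorem compositions_one_mod_k_eq_compositions_ge_k (k n : ℕ) (hk : 1 ≤ k) (hn : 1 ≤ n) :
    Nat.card {c : Composition n // ∀ x ∈ c.blocks, x ≡ 1 [MOD k]} =
      Nat.card {c : Composition (n + k - 1) // ∀ x ∈ c.blocks, k ≤ x} := by
  calc Nat.card {c : Composition n // ∀ x ∈ c.blocks, x ≡ 1 [MOD k]}
      = Nat.card {c : Composition n // ∀ x ∈ c.blocks, ∃ j, x = 1 + k * j} :=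
        Nat.card_congr <| Equiv.subtypeEquivRight fun c =>
          forall₂_congr fun _ hx => Nat.modEq_iff_exists_eq_add_mul (c.one_le_blocks hx)
    _ = Nat.card {w : List Bool // 1 * (w.count false + 1) + k * w.count true = n} := by
        rw [card_compositions_ap_blocks 1 k n one_pos hk,
          card_lists_eq_card_words (fun r s => 1 * r + k * s = n) (by omega)]
    _ = Nat.card {w : List Bool // k * (w.count false + 1) + 1 * w.count true = n + k - 1} :=
        Nat.card_congr <| Equiv.subtypeEquiv (Equiv.listEquivOfEquiv Equiv.boolNot) fun w => by
          simp only [Equiv.listEquivOfEquiv, Equiv.coe_fn_mk, List.count_map_boolNot,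
            Bool.not_true, Bool.not_false]
          lia
    _ = Nat.card {c : Composition (n + k - 1) // ∀ x ∈ c.blocks, ∃ j, x = k + 1 * j} := by
        rw [card_compositions_ap_blocks k 1 _ hk one_pos,
          card_lists_eq_card_words (fun r s => k * r + 1 * s = n + k - 1) (by omega)]
    _ = Nat.card {c : Composition (n + k - 1) // ∀ x ∈ c.blocks, k ≤ x} :=
        Nat.card_congr <| Equiv.subtypeEquivRight fun c =>
          forall₂_congr fun _ _ => by simp [le_iff_exists_add]
end

section
/- Let b_n be the number of compositions of n+1 with all parts greater than 1 and odd length, minus the number of compositions of n+1 with all parts greater than 1 and even length. Then b_n = (-1)^j if n = 3j+1 or n = 3j+2 for some integer j ≥ 0, and b_n = 0 otherwise (i.e., when n is divisible by 3). -/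
/-- The number of odd-length compositions of `n+1` with all parts greater than one. -/
noncomputable def oddCount (n : ℕ) : ℕ :=
  Nat.card {c : Composition (n + 1) // (∀ x ∈ c.blocks, 1 < x) ∧ Odd c.length}

/-- The number of even-length compositions of `n+1` with all parts greater than one. -/
noncomputable def evenCount (n : ℕ) : ℕ :=
  Nat.card {c : Composition (n + 1) // (∀ x ∈ c.blocks, 1 < x) ∧ Even c.length}

/-- Lists with sum `m`, parts `> 1`, length congruent to `r` mod 2. -/
def Good (m r : ℕ) (l : List ℕ) : Prop :=
  (l.sum = m ∧ ∀ x ∈ l, 1 < x) ∧ l.length % 2 = r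

/-- Equivalence between compositions with big parts and bare lists. -/
def compListEquiv (m : ℕ) (p : ℕ → Prop) :
    {c : Composition m // (∀ x ∈ c.blocks, 1 < x) ∧ p c.length} ≃
      {l : List ℕ // (l.sum = m ∧ ∀ x ∈ l, 1 < x) ∧ p l.length} where
  toFun c := ⟨c.1.blocks, ⟨c.1.blocks_sum, c.2.1⟩, c.2.2⟩
  invFun l := ⟨⟨l.1, fun hi => lt_trans one_pos (l.2.1.2 _ hi), l.2.1.1⟩, l.2.1.2, l.2.2⟩
  left_inv c := by
    apply Subtype.ext
    cases c.1
    rfl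
  right_inv l := rfl

instance goodFinite (m r : ℕ) : Finite {l : List ℕ // Good m r l} :=
  Finite.of_equiv _ (compListEquiv m (fun k => k % 2 = r))

noncomputable def cnt (m r : ℕ) : ℕ := Nat.card {l : List ℕ // Good m r l}

/-- Forward map of the key bijection. -/
def fwd (k r : ℕ) :
    {l : List ℕ // Good (k + 3) r l} →
      {l : List ℕ // Good (k + 2) r l} ⊕ {l : List ℕ // Good (k + 1) (1 - r) l}
  | ⟨[], h⟩ => absurd h (by simp [Good])
  | ⟨x :: t, h⟩ =>
    if hx : x = 2 then
      Sum.inr ⟨t, by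
        subst hx
        obtain ⟨⟨h1, h2⟩, h3⟩ := h
        simp only [List.sum_cons] at h1
        simp only [List.length_cons] at h3
        exact ⟨⟨by omega, fun y hy => h2 y (List.mem_cons_of_mem _ hy)⟩, by omega⟩⟩
    else
      Sum.inl ⟨(x - 1) :: t, by
        obtain ⟨⟨h1, h2⟩, h3⟩ := h
        have hx3 : 3 ≤ x := by
          have := h2 x (List.mem_cons_self)
          omega
        simp only [List.sum_cons] at h1
        refine ⟨⟨?_, fun y hy => ?_⟩, ?_⟩
        · simp only [List.sum_cons]; omega
        · rcases List.mem_cons.1 hy with hy | hy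
          · omega
          · exact h2 y (List.mem_cons_of_mem _ hy)
        · simpa using h3⟩

/-- Backward map of the key bijection. -/
def bwd (k r : ℕ) (hr : r < 2) :
    {l : List ℕ // Good (k + 2) r l} ⊕ {l : List ℕ // Good (k + 1) (1 - r) l} →
      {l : List ℕ // Good (k + 3) r l}
  | Sum.inl ⟨[], h⟩ => absurd h (by simp [Good])
  | Sum.inl ⟨y :: t, h⟩ =>
    ⟨(y + 1) :: t, by
      obtain ⟨⟨h1, h2⟩, h3⟩ := h
      have hy2 : 1 < y := h2 y (List.mem_cons_self)
      simp only [List.sum_cons] at h1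
      refine ⟨⟨?_, fun z hz => ?_⟩, ?_⟩
      · simp only [List.sum_cons]; omega
      · rcases List.mem_cons.1 hz with hz | hz
        · omega
        · exact h2 z (List.mem_cons_of_mem _ hz)
      · simpa using h3⟩
  | Sum.inr ⟨t, h⟩ =>
    ⟨2 :: t, by
      obtain ⟨⟨h1, h2⟩, h3⟩ := h
      refine ⟨⟨?_, fun z hz => ?_⟩, ?_⟩
      · simp only [List.sum_cons]; omega
      · rcases List.mem_cons.1 hz with hz | hz
        · omega
        · exact h2 z hz
      · simp only [List.length_cons]; omega⟩

lemma cnt_rec (k r : ℕ) (hr : r < 2) :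
    cnt (k + 3) r = cnt (k + 2) r + cnt (k + 1) (1 - r) := by
  have e : {l : List ℕ // Good (k + 3) r l} ≃
      {l : List ℕ // Good (k + 2) r l} ⊕ {l : List ℕ // Good (k + 1) (1 - r) l} := by
    refine ⟨fwd k r, bwd k r hr, ?_, ?_⟩
    · rintro ⟨l, h⟩
      match l, h with
      | [], h => exact absurd h (by simp [Good])
      | x :: t, h =>
        by_cases hx : x = 2
        · simp only [fwd, dif_pos hx, bwd]
          exact Subtype.ext (by subst hx; rfl)
        · simp only [fwd, dif_neg hx, bwd]
          have hx3 : 3 ≤ x := by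
            have := h.1.2 x (List.mem_cons_self)
            omega
          exact Subtype.ext (by simp; omega)
    · rintro (⟨l, h⟩ | ⟨t, h⟩)
      · match l, h with
        | [], h => exact absurd h (by simp [Good])
        | y :: t, h =>
          have hy2 : 1 < y := h.1.2 y (List.mem_cons_self)
          simp only [bwd, fwd, dif_neg (by omega : ¬ y + 1 = 2)]
          rfl
      · simp only [bwd]
        rfl
  rw [cnt, Nat.card_congr e, Nat.card_sum]
  rfl

lemma good_sum_zero {l : List ℕ} (h2 : ∀ x ∈ l, 1 < x) (h1 : l.sum = 0) : l = [] := by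
  cases l with
  | nil => rfl
  | cons a t =>
    have := h2 a (List.mem_cons_self)
    simp only [List.sum_cons] at h1
    omega

lemma good_sum_two {l : List ℕ} (h2 : ∀ x ∈ l, 1 < x) (h1 : l.sum = 2) : l = [2] := by
  cases l with
  | nil => simp at h1
  | cons a t =>
    have ha := h2 a (List.mem_cons_self)
    simp only [List.sum_cons] at h1
    have ht : t.sum = 0 := by
      cases t with
      | nil => rfl
      | cons b s =>
        have := h2 b (List.mem_cons_of_mem _ (List.mem_cons_self))
        simp only [List.sum_cons] at h1 ⊢
        omega
    have h0 := good_sum_zero (fun x hx => h2 x (List.mem_cons_of_mem _ hx)) ht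
    subst h0
    have : a = 2 := by simpa using h1
    rw [this]

lemma cnt_zero_zero : cnt 0 0 = 1 := by
  rw [cnt, Nat.card_eq_one_iff_unique]
  constructor
  · constructor
    rintro ⟨l, ⟨h1, h2⟩, h3⟩ ⟨l', ⟨h1', h2'⟩, h3'⟩
    apply Subtype.ext
    show l = l'
    rw [good_sum_zero h2 h1, good_sum_zero h2' h1']
  · exact ⟨⟨[], ⟨rfl, by simp⟩, rfl⟩⟩

lemma cnt_zero_one : cnt 0 1 = 0 := by
  rw [cnt, Nat.card_eq_zero]
  left
  constructor
  rintro ⟨l, ⟨h1, h2⟩, h3⟩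
  rw [good_sum_zero h2 h1] at h3
  simp at h3

lemma cnt_one (r : ℕ) : cnt 1 r = 0 := by
  rw [cnt, Nat.card_eq_zero]
  left
  constructor
  rintro ⟨l, ⟨h1, h2⟩, h3⟩
  cases l with
  | nil => simp at h1
  | cons a t =>
    have := h2 a (List.mem_cons_self)
    simp only [List.sum_cons] at h1
    omega

lemma cnt_two_one : cnt 2 1 = 1 := by
  rw [cnt, Nat.card_eq_one_iff_unique]
  constructor
  · constructor
    rintro ⟨l, ⟨h1, h2⟩, h3⟩ ⟨l', ⟨h1', h2'⟩, h3'⟩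
    apply Subtype.ext
    show l = l'
    rw [good_sum_two h2 h1, good_sum_two h2' h1']
  · exact ⟨⟨[2], ⟨rfl, by simp⟩, rfl⟩⟩

lemma cnt_two_zero : cnt 2 0 = 0 := by
  rw [cnt, Nat.card_eq_zero]
  left
  constructor
  rintro ⟨l, ⟨h1, h2⟩, h3⟩
  rw [good_sum_two h2 h1] at h3
  simp at h3

/-- Closed form for the signed count. -/
noncomputable def G (m : ℕ) : ℤ :=
  if m = 0 then -1 else if m % 3 = 1 then 0 else (-1) ^ ((m - 1) / 3)

lemma G_eq (m : ℕ) (h0 : m ≠ 0) (h1 : m % 3 ≠ 1) : G m = (-1) ^ ((m - 1) / 3) := by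
  rw [G, if_neg h0, if_neg h1]

lemma G_one (m : ℕ) (h1 : m % 3 = 1) : G m = 0 := by
  rw [G, if_neg (by omega : ¬ m = 0), if_pos h1]

lemma keyG : ∀ m : ℕ, (cnt m 1 : ℤ) - cnt m 0 = G m := by
  intro m
  induction m using Nat.strong_induction_on with
  | _ m ih =>
    match m with
    | 0 => norm_num [cnt_zero_zero, cnt_zero_one, G]
    | 1 => norm_num [cnt_one, G]
    | 2 => norm_num [cnt_two_one, cnt_two_zero, G]
    | (k + 3) =>
      have ih2 := ih (k + 2) (by omega)
      have ih1 := ih (k + 1) (by omega)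
      have e : (cnt (k + 3) 1 : ℤ) - cnt (k + 3) 0 =
          ((cnt (k + 2) 1 : ℤ) - cnt (k + 2) 0) - ((cnt (k + 1) 1 : ℤ) - cnt (k + 1) 0) := by
        rw [cnt_rec k 1 (by omega), cnt_rec k 0 (by omega)]
        norm_num
        ring
      rw [e, ih2, ih1]
      obtain ⟨a, ha⟩ : ∃ a, k = 3 * a ∨ k = 3 * a + 1 ∨ k = 3 * a + 2 := ⟨k / 3, by omega⟩
      rcases ha with ha | ha | ha <;> subst ha
      · -- k = 3a : G(3a+2) - G(3a+1) = G(3a+3)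
        have hA : G (3 * a + 3) = (-1 : ℤ) ^ a := by
          rw [G_eq _ (by omega) (by omega)]
          congr 1
          omega
        have hB : G (3 * a + 2) = (-1 : ℤ) ^ a := by
          rw [G_eq _ (by omega) (by omega)]
          congr 1
          omega
        have hC : G (3 * a + 1) = 0 := G_one _ (by omega)
        rw [hA, hB, hC]
        ring
      · have hA : G (3 * a + 1 + 3) = 0 := G_one _ (by omega)
        have hB : G (3 * a + 1 + 2) = (-1 : ℤ) ^ a := by
          rw [G_eq _ (by omega) (by omega)]
          congr 1
          omega
        have hC : G (3 * a + 1 + 1) = (-1 : ℤ) ^ a := by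
          rw [G_eq _ (by omega) (by omega)]
          congr 1
          omega
        rw [hA, hB, hC]
        ring
      · have hA : G (3 * a + 2 + 3) = (-1 : ℤ) ^ (a + 1) := by
          rw [G_eq _ (by omega) (by omega)]
          congr 1
          omega
        have hB : G (3 * a + 2 + 2) = 0 := G_one _ (by omega)
        have hC : G (3 * a + 2 + 1) = (-1 : ℤ) ^ a := by
          rw [G_eq _ (by omega) (by omega)]
          congr 1
          omega
        rw [hA, hB, hC, pow_succ]
        ring

lemma oddCount_eq (n : ℕ) : oddCount n = cnt (n + 1) 1 := by
  rw [oddCount, cnt]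
  refine Nat.card_congr ((compListEquiv (n + 1) Odd).trans
    (Equiv.subtypeEquivRight fun l => ?_))
  simp [Good, Nat.odd_iff, and_assoc]

lemma evenCount_eq (n : ℕ) : evenCount n = cnt (n + 1) 0 := by
  rw [evenCount, cnt]
  refine Nat.card_congr ((compListEquiv (n + 1) Even).trans
    (Equiv.subtypeEquivRight fun l => ?_))
  simp [Good, Nat.even_iff, and_assoc]

/-- `b n = (-1)^j` if `n = 3j+1` or `n = 3j+2`, and `b n = 0` if `3 ∣ n`. -/
theorem comp_legendre (n : ℕ) :
    (∀ j : ℕ, (n = 3 * j + 1 ∨ n = 3 * j + 2) →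
      (oddCount n : ℤ) - evenCount n = (-1) ^ j) ∧
    (n % 3 = 0 → (oddCount n : ℤ) - evenCount n = 0) := by
  rw [oddCount_eq, evenCount_eq, keyG (n + 1)]
  constructor
  · rintro j (h | h) <;> subst h
    · rw [G_eq _ (by omega) (by omega)]
      congr 1
      omega
    · rw [G_eq _ (by omega) (by omega)]
      congr 1
      omega
  · intro h
    exact G_one _ (by omega)
end

section
/- For integers k ≥ 1 and n ≥ 1, let b_{k,n} be the number of odd-length compositions of n+k-1 with all parts at least k, minus the number of even-length compositions of n+k-1 with all parts at least k. Then b_{k,n} = Σ_{0 ≤ j ≤ (n-1)/k} (-1)^j · C(n-1-j(k-1), j). -/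
open Finset

/-- Multisets of `Fin j` of size `M` correspond to tuples with sum `M`. -/
def symEquivTuple (j M : ℕ) : Sym (Fin j) M ≃ {f : Fin j → ℕ // ∑ i, f i = M} where
  toFun s := ⟨fun i => Multiset.count i s.1, by
    rw [Multiset.sum_count_eq_card (fun a _ => Finset.mem_univ a)]
    exact s.2⟩
  invFun f := ⟨∑ i : Fin j, (f.1 i) • ({i} : Multiset (Fin j)), by
    simp only [Multiset.card_sum, Multiset.card_nsmul, Multiset.card_singleton, mul_one]
    exact f.2⟩
  left_inv s := by
    ext a
    simp [Multiset.count_sum', Multiset.count_nsmul, Multiset.count_singleton]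
  right_inv f := by
    ext a
    simp [Multiset.count_sum', Multiset.count_nsmul, Multiset.count_singleton]

lemma card_tuple (j M : ℕ) :
    Nat.card {f : Fin j → ℕ // ∑ i, f i = M} = (M + j - 1).choose M := by
  rw [← Nat.card_congr (symEquivTuple j M), Nat.card_eq_fintype_card,
    Sym.card_sym_eq_choose, Fintype.card_fin, Nat.add_comm]

/-- Lists of length `j` with sum `M` correspond to tuples with sum `M`. -/
def listEquivTuple (j M : ℕ) :
    {l : List ℕ // l.length = j ∧ l.sum = M} ≃ {f : Fin j → ℕ // ∑ i, f i = M} where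
  toFun l := ⟨fun i => l.1[(i : ℕ)]'(by omega), by
    rw [← List.sum_ofFn]
    have : List.ofFn (fun i : Fin j => l.1[(i : ℕ)]'(by omega)) = l.1 := by
      apply List.ext_getElem
      · simp [l.2.1]
      · intro i h1 h2; simp
    rw [this]; exact l.2.2⟩
  invFun f := ⟨List.ofFn f.1, by simp, by rw [List.sum_ofFn]; exact f.2⟩
  left_inv l := by
    apply Subtype.ext
    apply List.ext_getElem
    · simp [l.2.1]
    · intro i h1 h2; simp
  right_inv f := by
    apply Subtype.ext
    funext i
    simp

lemma map_add_sum (k : ℕ) (l : List ℕ) : (l.map (· + k)).sum = l.sum + l.length * k := by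
  induction l with
  | nil => simp
  | cons a t ih => simp [ih]; ring

lemma map_sub_sum (k : ℕ) (l : List ℕ) (h : ∀ x ∈ l, k ≤ x) :
    (l.map (· - k)).sum + l.length * k = l.sum := by
  induction l with
  | nil => simp
  | cons a t ih =>
    have ha : k ≤ a := h a (by simp)
    have := ih (fun x hx => h x (by simp [hx]))
    simp only [List.map_cons, List.sum_cons, List.length_cons, Nat.add_mul, one_mul]
    omega

/-- Shift each part down by `k`. -/
def shiftEquiv (k j M : ℕ) :
    {l : List ℕ // l.length = j ∧ l.sum = M + j * k ∧ ∀ x ∈ l, k ≤ x} ≃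
      {l : List ℕ // l.length = j ∧ l.sum = M} where
  toFun l := ⟨l.1.map (· - k), by
    obtain ⟨hlen, hsum, hge⟩ := l.2
    refine ⟨by simp [hlen], ?_⟩
    have := map_sub_sum k l.1 hge
    rw [hlen, hsum] at this
    omega⟩
  invFun l := ⟨l.1.map (· + k), by
    obtain ⟨hlen, hsum⟩ := l.2
    refine ⟨by simp [hlen], ?_, ?_⟩
    · rw [map_add_sum, hlen, hsum]
    · intro x hx
      simp only [List.mem_map] at hx
      obtain ⟨a, _, rfl⟩ := hx
      omega⟩
  left_inv l := by
    apply Subtype.ext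
    simp only [List.map_map]
    calc l.1.map ((· + k) ∘ (· - k)) = l.1.map id := by
          apply List.map_congr_left
          intro x hx
          have := l.2.2.2 x hx
          simp; omega
      _ = l.1 := List.map_id _
  right_inv l := by
    apply Subtype.ext
    simp only [List.map_map]
    calc l.1.map ((· - k) ∘ (· + k)) = l.1.map id := by
          apply List.map_congr_left
          intro x hx; simp
      _ = l.1 := List.map_id _

/-- Compositions with all parts `≥ k` correspond to lists with all entries `≥ k`. -/
def compEquivList (m k j : ℕ) (hk : 1 ≤ k) :
    {c : Composition m // (∀ x ∈ c.blocks, k ≤ x) ∧ c.length = j} ≃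
      {l : List ℕ // l.length = j ∧ l.sum = m ∧ ∀ x ∈ l, k ≤ x} where
  toFun c := ⟨c.1.blocks, c.2.2, c.1.blocks_sum, c.2.1⟩
  invFun l := ⟨⟨l.1, fun {x} hx => lt_of_lt_of_le hk (l.2.2.2 x hx), l.2.2.1⟩, l.2.2.2, l.2.1⟩
  left_inv _ := rfl
  right_inv _ := rfl

lemma sum_ge_of_all_ge (k : ℕ) (l : List ℕ) (h : ∀ x ∈ l, k ≤ x) : l.length * k ≤ l.sum := by
  induction l with
  | nil => simp
  | cons a t ih =>
    have h1 := ih (fun x hx => h x (by simp [hx]))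
    have h2 := h a (by simp)
    simp only [List.length_cons, List.sum_cons, Nat.add_mul, one_mul]
    omega

lemma card_comp (m k j : ℕ) (hk : 1 ≤ k) :
    Nat.card {c : Composition m // (∀ x ∈ c.blocks, k ≤ x) ∧ c.length = j} =
      if j * k ≤ m then (m - j * k + j - 1).choose (m - j * k) else 0 := by
  split_ifs with h
  · have e2 : {l : List ℕ // l.length = j ∧ l.sum = m ∧ ∀ x ∈ l, k ≤ x} ≃
        {l : List ℕ // l.length = j ∧ l.sum = (m - j * k) + j * k ∧ ∀ x ∈ l, k ≤ x} :=
      Equiv.subtypeEquivRight (by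
        intro l
        rw [show (m - j * k) + j * k = m by omega])
    rw [Nat.card_congr ((((compEquivList m k j hk).trans e2).trans
      (shiftEquiv k j (m - j * k))).trans (listEquivTuple j _)), card_tuple]
  · have : IsEmpty {c : Composition m // (∀ x ∈ c.blocks, k ≤ x) ∧ c.length = j} := by
      constructor
      rintro ⟨c, hge, hlen⟩
      have hs := sum_ge_of_all_ge k c.blocks hge
      rw [c.blocks_sum] at hs
      rw [Composition.length] at hlen
      rw [hlen] at hs
      omega
    simp


/-- Number of odd-length (`parity = true`) resp. even-length compositions of `n+k-1`
with all parts at least `k`. -/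
noncomputable def countGe (k n : ℕ) (parity : Bool) : ℕ :=
  Nat.card {c : Composition (n + k - 1) //
    (∀ x ∈ c.blocks, k ≤ x) ∧ (if parity then Odd c.length else Even c.length)}

/-- `b_{k,n} = Σ_{0 ≤ j ≤ (n-1)/k} (-1)^j C(n-1-j(k-1), j)`. -/
theorem signed_munagi (k n : ℕ) (hk : 1 ≤ k) (hn : 1 ≤ n) :
    (countGe k n true : ℤ) - countGe k n false =
      ∑ j ∈ Finset.range ((n - 1) / k + 1),
        (-1) ^ j * ((n - 1 - j * (k - 1)).choose j : ℤ) := by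
  classical
  set m := n + k - 1 with hm
  have hm1 : 1 ≤ m := by omega
  set P : Composition m → Prop := fun c => ∀ x ∈ c.blocks, k ≤ x with hP
  set N : ℕ → ℕ := fun j => (univ.filter (fun c : Composition m => P c ∧ c.length = j)).card
    with hN
  have hNval : ∀ j, N j = if j * k ≤ m then (m - j * k + j - 1).choose (m - j * k) else 0 := by
    intro j
    rw [← card_comp m k j hk, Nat.card_eq_fintype_card, Fintype.card_subtype]
  have key : ∀ Q : ℕ → Prop, ∀ inst : DecidablePred Q,
      Nat.card {c : Composition m // P c ∧ Q c.length} =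
      ∑ j ∈ range (m + 1), if Q j then N j else 0 := by
    intro Q inst
    rw [Nat.card_eq_fintype_card, Fintype.card_subtype]
    rw [Finset.card_eq_sum_card_fiberwise
      (f := fun c : Composition m => c.length) (t := range (m + 1))
      (fun c _ => Finset.mem_range.mpr (Nat.lt_succ_of_le c.length_le))]
    apply Finset.sum_congr rfl
    intro j _
    rw [Finset.filter_filter]
    split_ifs with hq
    · congr 1
      apply Finset.filter_congr
      intro c _
      constructor
      · rintro ⟨⟨h1, _⟩, h3⟩; exact ⟨h1, h3⟩
      · rintro ⟨h1, h3⟩; exact ⟨⟨h1, h3 ▸ hq⟩, h3⟩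
    · rw [Finset.filter_false_of_mem, Finset.card_empty]
      rintro c _ ⟨⟨_, h2⟩, h3⟩
      exact hq (h3 ▸ h2)
  have hT : countGe k n true = ∑ j ∈ range (m + 1), if Odd j then N j else 0 := by
    rw [show countGe k n true = Nat.card {c : Composition m // P c ∧ Odd c.length} from rfl]
    exact key Odd _
  have hF : countGe k n false = ∑ j ∈ range (m + 1), if Even j then N j else 0 := by
    rw [show countGe k n false = Nat.card {c : Composition m // P c ∧ Even c.length} from rfl]
    exact key Even _
  rw [hT, hF]
  push_cast
  rw [← Finset.sum_sub_distrib]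
  have hterm : ∀ j ∈ range (m + 1),
      ((if Odd j then (N j : ℤ) else 0) - (if Even j then (N j : ℤ) else 0)) =
        (-1) ^ (j + 1) * (N j : ℤ) := by
    intro j _
    rcases Nat.even_or_odd j with he | ho
    · rw [if_neg (by simpa using he), if_pos he, Odd.neg_one_pow he.add_one]
      ring
    · rw [if_pos ho, if_neg (by simpa using ho), Even.neg_one_pow ho.add_one]
      ring
  rw [Finset.sum_congr rfl hterm]
  rw [Finset.sum_range_succ']
  have h0 : (-1 : ℤ) ^ (0 + 1) * (N 0 : ℤ) = 0 := by
    have hz : N 0 = 0 := by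
      rw [hNval]
      rw [if_pos (by simp)]
      simp only [Nat.zero_mul, Nat.sub_zero, Nat.add_zero]
      exact Nat.choose_eq_zero_of_lt (by omega)
    rw [hz]
    simp
  rw [h0, add_zero]
  have hmain : ∀ i ∈ range m,
      (-1 : ℤ) ^ (i + 1 + 1) * (N (i + 1) : ℤ) =
        (-1) ^ i * ((n - 1 - i * (k - 1)).choose i : ℤ) := by
    intro i _
    have hpow : (-1 : ℤ) ^ (i + 1 + 1) = (-1) ^ i := by
      rw [pow_succ, pow_succ]; ring
    rw [hpow, hNval]
    have hik : i * (k - 1) + i = i * k := by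
      calc i * (k - 1) + i = i * ((k - 1) + 1) := by ring
        _ = i * k := by rw [Nat.sub_add_cancel hk]
    congr 2
    rw [show (i + 1) * k = i * k + k from by ring]
    split_ifs with h
    · generalize hA : i * (k - 1) = A at hik ⊢
      generalize hB : i * k = B at hik h ⊢
      have e1 : m - (B + k) = n - 1 - B := by omega
      have e2 : m - (B + k) + (i + 1) - 1 = n - 1 - A := by omega
      rw [e2, e1]
      have e3 : n - 1 - B = (n - 1 - A) - i := by omega
      rw [e3, Nat.choose_symm (by omega)]
    · symm
      apply Nat.choose_eq_zero_of_lt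
      rcases Nat.eq_zero_or_pos i with rfl | hi1
      · exact absurd (by omega : 0 * k + k ≤ m) h
      · generalize hA : i * (k - 1) = A at hik ⊢
        generalize hB : i * k = B at hik h ⊢
        omega
  rw [Finset.sum_congr rfl hmain]
  symm
  apply Finset.sum_subset
  · intro i hi
    simp only [Finset.mem_range] at hi ⊢
    have h1 : (n - 1) / k ≤ n - 1 := Nat.div_le_self _ _
    generalize hD : (n - 1) / k = D at hi h1
    omega
  · intro i hi' hi
    simp only [Finset.mem_range, not_lt] at hi
    have hi1 : 1 ≤ i := by
      generalize hD : (n - 1) / k = D at hi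
      omega
    have h2 : n - 1 < i * k := by
      have hd : (n - 1) / k < i := by
        generalize hD : (n - 1) / k = D at hi ⊢
        omega
      exact (Nat.div_lt_iff_lt_mul (show 0 < k by omega)).mp hd
    have hik : i * (k - 1) + i = i * k := by
      calc i * (k - 1) + i = i * ((k - 1) + 1) := by ring
        _ = i * k := by rw [Nat.sub_add_cancel hk]
    rw [Nat.choose_eq_zero_of_lt ?_]
    · ring
    · generalize hA : i * (k - 1) = A at hik ⊢
      generalize hB : i * k = B at hik h2 ⊢
      omega
end

section
/- For integers k ≥ 1 and n > k, the sequence b_{k,n} (the number of odd-length compositions of n+k-1 with all parts at least k minus the number of even-length ones) satisfies the recurrence b_{k,n} = b_{k,n-1} - b_{k,n-k}, with initial conditions b_{k,n} = 1 for n = 1, ..., k. -/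
/-- Lists of naturals with given sum `m`, all entries at least `k`, and length of given parity. -/
def LL (k m : ℕ) (p : Bool) : Type :=
  {l : List ℕ // l.sum = m ∧ (∀ x ∈ l, k ≤ x) ∧ (if p then Odd l.length else Even l.length)}

/-- The signed count `b_{k,n}` of compositions of `n+k-1` with parts at least `k`. -/
noncomputable def b (k n : ℕ) : ℤ := (countGe k n true : ℤ) - countGe k n false

/-- Compositions of `m` with parts ≥ `k` and length parity `p` are the same as
lists with sum `m`, entries ≥ `k`, and length parity `p`, when `k ≥ 1`. -/
def compEquiv (k : ℕ) (hk : 1 ≤ k) (m : ℕ) (p : Bool) :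
    {c : Composition m //
      (∀ x ∈ c.blocks, k ≤ x) ∧ (if p then Odd c.length else Even c.length)} ≃ LL k m p where
  toFun c := ⟨c.1.blocks, c.1.blocks_sum, c.2⟩
  invFun l := ⟨⟨l.1, fun hi => lt_of_lt_of_le hk (l.2.2.1 _ hi), l.2.1⟩, l.2.2⟩
  left_inv c := rfl
  right_inv l := rfl

instance LL.finite (k m : ℕ) (p : Bool) [NeZero k] : Finite (LL k m p) := by
  have hk : 1 ≤ k := Nat.one_le_iff_ne_zero.mpr (NeZero.ne k)
  exact Finite.of_equiv _ (compEquiv k hk m p)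

lemma countGe_eq (k : ℕ) (hk : 1 ≤ k) (n : ℕ) (p : Bool) :
    countGe k n p = Nat.card (LL k (n + k - 1) p) :=
  Nat.card_congr (compEquiv k hk (n + k - 1) p)

lemma LL_nonnil {k m : ℕ} {p : Bool} (hm : 0 < m) (l : LL k m p) : l.1 ≠ [] := by
  intro h
  have := l.2.1
  rw [h] at this
  simp at this
  omega

lemma parity_cons (p : Bool) (a : ℕ) (t : List ℕ) :
    (if p then Odd (a :: t).length else Even (a :: t).length) ↔
      (if !p then Odd t.length else Even t.length) := by
  cases p <;> simp [List.length_cons, Nat.even_add_one, Nat.odd_add_one, Nat.not_even_iff_odd,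
    Nat.not_odd_iff_even]

/-- The key bijection giving the recurrence. -/
def splitEquiv (k : ℕ) (hk : 1 ≤ k) (m : ℕ) (hm : k < m) (p : Bool) :
    LL k m p ≃ (LL k (m - 1) p ⊕ LL k (m - k) (!p)) where
  toFun l :=
    if h : l.1.head! = k then
      Sum.inr ⟨l.1.tail, by
        have hne := LL_nonnil (by omega) l
        have hcons := List.cons_head!_tail hne
        obtain ⟨hsum, hge, hpar⟩ := l.2
        refine ⟨?_, ?_, ?_⟩
        · rw [← hcons, List.sum_cons, h] at hsum; omega
        · intro x hx
          exact hge x (by rw [← hcons]; exact List.mem_cons_of_mem _ hx)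
        · have := (parity_cons p (l.1.head!) l.1.tail).mp (by rwa [hcons])
          exact this⟩
    else
      Sum.inl ⟨(l.1.head! - 1) :: l.1.tail, by
        have hne := LL_nonnil (by omega) l
        have hcons := List.cons_head!_tail hne
        obtain ⟨hsum, hge, hpar⟩ := l.2
        have hhead : k ≤ l.1.head! := hge _ (by rw [← hcons]; exact List.mem_cons_self)
        have hhead' : k + 1 ≤ l.1.head! := by omega
        refine ⟨?_, ?_, ?_⟩
        · rw [← hcons, List.sum_cons] at hsum
          rw [List.sum_cons]; omega
        · intro x hx
          rcases List.mem_cons.mp hx with h1 | h2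
          · omega
          · exact hge x (by rw [← hcons]; exact List.mem_cons_of_mem _ h2)
        · rw [← hcons] at hpar
          simpa using hpar⟩
  invFun s :=
    match s with
    | Sum.inl l' => ⟨(l'.1.head! + 1) :: l'.1.tail, by
        have hne := LL_nonnil (show 0 < m - 1 by omega) l'
        have hcons := List.cons_head!_tail hne
        obtain ⟨hsum, hge, hpar⟩ := l'.2
        have hhead : k ≤ l'.1.head! := hge _ (by rw [← hcons]; exact List.mem_cons_self)
        refine ⟨?_, ?_, ?_⟩
        · rw [← hcons, List.sum_cons] at hsum
          rw [List.sum_cons]; omega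
        · intro x hx
          rcases List.mem_cons.mp hx with h1 | h2
          · omega
          · exact hge x (by rw [← hcons]; exact List.mem_cons_of_mem _ h2)
        · rw [← hcons] at hpar
          simpa using hpar⟩
    | Sum.inr t => ⟨k :: t.1, by
        obtain ⟨hsum, hge, hpar⟩ := t.2
        refine ⟨?_, ?_, ?_⟩
        · rw [List.sum_cons]; omega
        · intro x hx
          rcases List.mem_cons.mp hx with h1 | h2
          · omega
          · exact hge x h2
        · exact (parity_cons p k t.1).mpr (by simpa using hpar)⟩
  left_inv l := by
    have hne := LL_nonnil (show 0 < m by omega) l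
    have hcons := List.cons_head!_tail hne
    by_cases h : l.1.head! = k
    · simp only [h, dif_pos]
      apply Subtype.ext
      rw [h] at hcons
      exact hcons
    · simp only [h, dif_neg, not_false_iff]
      apply Subtype.ext
      have hge := l.2.2.1
      have hhead : k ≤ l.1.head! := hge _ (by rw [← hcons]; exact List.mem_cons_self)
      have hh1 : 1 ≤ l.1.head! := by omega
      simp only [List.head!_cons, List.tail_cons]
      rw [Nat.sub_add_cancel hh1]
      exact hcons
  right_inv s := by
    match s with
    | Sum.inl l' =>
      have hne := LL_nonnil (show 0 < m - 1 by omega) l'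
      have hcons := List.cons_head!_tail hne
      have hge := l'.2.2.1
      have hhead : k ≤ l'.1.head! := hge _ (by rw [← hcons]; exact List.mem_cons_self)
      have h : ¬((((l'.1.head! + 1) :: l'.1.tail : List ℕ)).head! = k) := by
        simp; omega
      dsimp only
      rw [dif_neg h]
      congr 1
      apply Subtype.ext
      simp only [List.head!_cons, List.tail_cons, Nat.add_sub_cancel]
      exact hcons
    | Sum.inr t =>
      dsimp only
      rw [dif_pos (by simp)]
      congr 1

lemma card_rec (k : ℕ) (hk : 1 ≤ k) (m : ℕ) (hm : k < m) (p : Bool) :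
    Nat.card (LL k m p) = Nat.card (LL k (m - 1) p) + Nat.card (LL k (m - k) (!p)) := by
  haveI : NeZero k := ⟨by omega⟩
  rw [Nat.card_congr (splitEquiv k hk m hm p), Nat.card_sum]

lemma LL_eq_single {k m : ℕ} {p : Bool} (hk : k ≤ m) (hm : m < 2 * k) (hk1 : 1 ≤ k)
    (l : LL k m p) : l.1 = [m] := by
  have hne := LL_nonnil (show 0 < m by omega) l
  obtain ⟨hsum, hge, hpar⟩ := l.2
  rcases l with ⟨l, _⟩
  match l with
  | [] => exact absurd rfl hne
  | [a] => simp at hsum; simp [hsum]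
  | a :: b :: t =>
    exfalso
    have ha : k ≤ a := hge a (by simp)
    have hb : k ≤ b := hge b (by simp)
    simp only [List.sum_cons] at hsum
    omega

lemma card_init_true (k m : ℕ) (hk : 1 ≤ k) (hkm : k ≤ m) (hm : m < 2 * k) :
    Nat.card (LL k m true) = 1 := by
  haveI : Unique (LL k m true) := by
    refine ⟨⟨⟨[m], by simp, ?_, by simp [Nat.odd_iff]⟩⟩, ?_⟩
    · intro x hx; simp at hx; omega
    · intro l
      apply Subtype.ext
      exact LL_eq_single hkm hm hk l
  exact Nat.card_unique

lemma card_init_false (k m : ℕ) (hk : 1 ≤ k) (hkm : k ≤ m) (hm : m < 2 * k) :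
    Nat.card (LL k m false) = 0 := by
  haveI : IsEmpty (LL k m false) := by
    constructor
    intro l
    have h1 := LL_eq_single hkm hm hk l
    have := l.2.2.2
    rw [h1] at this
    simp [Nat.even_iff] at this
  exact Nat.card_of_isEmpty

/-- `b_{k,n} = 1` for `1 ≤ n ≤ k`, and `b_{k,n} = b_{k,n-1} - b_{k,n-k}` for `n > k`. -/
theorem signed_munagi_recurrence (k : ℕ) (hk : 1 ≤ k) :
    (∀ n, 1 ≤ n → n ≤ k → b k n = 1) ∧
    (∀ n, k < n → b k n = b k (n - 1) - b k (n - k)) := by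
  constructor
  · intro n h1 h2
    unfold b
    rw [countGe_eq k hk, countGe_eq k hk,
      card_init_true k (n + k - 1) hk (by omega) (by omega),
      card_init_false k (n + k - 1) hk (by omega) (by omega)]
    simp
  · intro n hn
    unfold b
    rw [countGe_eq k hk, countGe_eq k hk, countGe_eq k hk, countGe_eq k hk,
      countGe_eq k hk, countGe_eq k hk]
    have h1 : k < n + k - 1 := by omega
    have hrT := card_rec k hk (n + k - 1) h1 true
    have hrF := card_rec k hk (n + k - 1) h1 false
    have e1 : n + k - 1 - 1 = n - 1 + k - 1 := by omega
    have e2 : n + k - 1 - k = n - k + k - 1 := by omega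
    rw [e1, e2] at hrT hrF
    simp only [Bool.not_true, Bool.not_false] at hrT hrF
    rw [hrT, hrF]
    push_cast
    ring
end

section
/- Fix integers k ≥ 1, n ≥ 1, and r > s ≥ 0. Let b be the number of odd-length compositions of n+k-1 with all parts at least k and congruent to k+s modulo r, minus the number of even-length such compositions. Then b = Σ_{ri + j(k+s) = n-1-s, i,j ≥ 0} (-1)^j · C(i+j, i). -/
/-!
Splitting off the first part, the signed count `b(N)` of compositions of `N` with parts in the
progression `c, c + r, c + 2r, …` (here `c = k + s`) satisfies `b(M + c) = b(M - r + c) - b(M)`,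
the first term present only for `r ≤ M`: a first part other than `c` can lose `r` and stay in the
progression. So `b` has generating function `-(1 - x^r) / (1 - x^r + x^c)`, and `b(M + c)` is the
coefficient of `x^M` in `1 / (1 - x^r + x^c) = Σ_t (x^r - x^c)^t`, which is the binomial sum of
the theorem. Concretely, that sum obeys the matching recurrence by Pascal's rule, and strong
induction on `M` concludes.
-/

/-- Number of odd-length (`parity = true`) resp. even-length compositions of `n+k-1`
with all parts at least `k` and congruent to `k+s` modulo `r`. -/
noncomputable def countCong (k n r s : ℕ) (parity : Bool) : ℕ :=
  Nat.card {c : Composition (n + k - 1) //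
    (∀ x ∈ c.blocks, k ≤ x ∧ x ≡ k + s [MOD r]) ∧
    (if parity then Odd c.length else Even c.length)}

open Finset

def compositionLists (N : ℕ) : Finset (List ℕ) :=
  univ.image (Composition.blocks (n := N))

theorem mem_compositionLists {N : ℕ} {l : List ℕ} :
    l ∈ compositionLists N ↔ (∀ x ∈ l, 0 < x) ∧ l.sum = N := by
  simp only [compositionLists, mem_image, mem_univ, true_and]
  exact ⟨by rintro ⟨c, rfl⟩; exact ⟨fun _ => c.blocks_pos, c.blocks_sum⟩,
    fun ⟨hpos, hsum⟩ => ⟨⟨l, hpos _, hsum⟩, rfl⟩⟩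

theorem compositionLists_zero : compositionLists 0 = {[]} := by
  refine eq_singleton_iff_unique_mem.2 ⟨mem_compositionLists.2 ⟨by simp, rfl⟩, fun l hl => ?_⟩
  obtain ⟨hpos, hsum⟩ := mem_compositionLists.1 hl
  rw [List.sum_eq_zero_iff] at hsum
  exact List.eq_nil_iff_forall_not_mem.2 fun x hx => (hpos x hx).ne' (hsum x hx)

theorem compositionLists_of_pos {N : ℕ} (hN : 0 < N) :
    compositionLists N = (Icc 1 N).biUnion fun x => (compositionLists (N - x)).image (x :: ·) := by
  ext (_ | ⟨x, l⟩)
  · simp only [mem_compositionLists, List.sum_nil, mem_biUnion, mem_image, reduceCtorEq, and_false,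
      exists_false, iff_false, not_and]
    omega
  · simp only [mem_compositionLists, List.mem_cons, forall_eq_or_imp, List.sum_cons, mem_biUnion,
      mem_Icc, mem_image, List.cons.injEq, exists_eq_right_right]
    grind

section SignedCount

variable (P : ℕ → Prop) [DecidablePred P]

def signedCount (N : ℕ) : ℤ :=
  ∑ l ∈ compositionLists N with ∀ x ∈ l, P x, (-1) ^ (l.length + 1)

theorem signedCount_zero : signedCount P 0 = -1 := by
  simp [signedCount, compositionLists_zero, filter_singleton]

theorem signedCount_of_pos {N : ℕ} (hN : 0 < N) :
    signedCount P N = -∑ x ∈ Icc 1 N with P x, signedCount P (N - x) := by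
  have hdisj : (Icc 1 N : Set ℕ).PairwiseDisjoint
      fun x => (compositionLists (N - x)).image (x :: ·) := by
    intro x _ y _ hxy
    simp only [Function.onFun, disjoint_left, mem_image]
    rintro _ ⟨l, -, rfl⟩ ⟨m, -, hm⟩
    exact hxy (List.cons.inj hm).1.symm
  rw [signedCount, compositionLists_of_pos hN, sum_filter, sum_biUnion hdisj, sum_filter,
    ← sum_neg_distrib]
  refine sum_congr rfl fun x _ => ?_
  rw [sum_image fun _ _ _ _ h => (List.cons.inj h).2]
  split_ifs with hx
  · simp only [signedCount, sum_filter, List.forall_mem_cons, hx, true_and, List.length_cons,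
      ← sum_neg_distrib]
    refine sum_congr rfl fun l _ => ?_
    split_ifs <;> ring
  · simp [hx]

theorem signedCount_congr {Q : ℕ → Prop} [DecidablePred Q] (h : ∀ x, P x ↔ Q x) (N : ℕ) :
    signedCount P N = signedCount Q N := by
  simp only [signedCount, h]

theorem card_odd_sub_card_even (N : ℕ) :
    (Nat.card {c : Composition N // (∀ x ∈ c.blocks, P x) ∧ Odd c.length} : ℤ)
      - Nat.card {c : Composition N // (∀ x ∈ c.blocks, P x) ∧ Even c.length}
      = signedCount P N := by
  have hcard (Q : List ℕ → Prop) [DecidablePred Q] :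
      Nat.card {c : Composition N // Q c.blocks} = #{l ∈ compositionLists N | Q l} := by
    rw [Nat.card_eq_fintype_card, Fintype.card_subtype, compositionLists, filter_image,
      card_image_of_injective _ fun _ _ => Composition.ext]
  rw [hcard (fun l => (∀ x ∈ l, P x) ∧ Odd l.length),
    hcard (fun l => (∀ x ∈ l, P x) ∧ Even l.length), ← filter_filter, ← filter_filter,
    natCast_card_filter, natCast_card_filter, ← sum_sub_distrib, signedCount]
  refine sum_congr rfl fun l _ => ?_
  rcases Nat.even_or_odd l.length with h | h <;>
    simp [h, Nat.not_odd_iff_even.2, Nat.not_even_iff_odd.2, pow_succ]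

end SignedCount

section Progression

variable {c r : ℕ}

abbrev InProgression (c r x : ℕ) : Prop := c ≤ x ∧ x ≡ c [MOD r]

theorem inProgression_iff (hr : 0 < r) {x : ℕ} :
    InProgression c r x ↔ x = c ∨ c + r ≤ x ∧ InProgression c r (x - r) := by
  have hmod (h : r ≤ x) : x - r ≡ c [MOD r] ↔ x ≡ c [MOD r] := by
    unfold Nat.ModEq
    rw [← Nat.add_mod_right (x - r), Nat.sub_add_cancel h]
  constructor
  · rintro ⟨hcx, hx⟩
    rcases hcx.eq_or_lt with rfl | hlt
    · exact .inl rfl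
    have : r ≤ x - c := Nat.le_of_dvd (by omega) ((Nat.modEq_iff_dvd' hcx).1 hx.symm)
    exact .inr ⟨by omega, by omega, (hmod (by omega)).2 hx⟩
  · rintro (rfl | ⟨hle, -, hx⟩)
    · exact ⟨le_rfl, rfl⟩
    · exact ⟨by omega, (hmod (by omega)).1 hx⟩

theorem filter_inProgression_eq_empty {N : ℕ} (hN : N < c) :
    {x ∈ Icc 1 N | InProgression c r x} = ∅ :=
  filter_false_of_mem fun x hx h => by simp only [mem_Icc] at hx; omega

theorem filter_inProgression_add (hc : 0 < c) (hr : 0 < r) (M : ℕ) :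
    {x ∈ Icc 1 (M + c) | InProgression c r x} =
      insert c (({x ∈ Icc 1 (M + c - r) | InProgression c r x}).map (addRightEmbedding r)) := by
  ext x
  simp only [mem_filter, mem_Icc, mem_insert, mem_map, addRightEmbedding_apply]
  rw [inProgression_iff hr]
  constructor
  · rintro ⟨⟨-, hxM⟩, rfl | ⟨hle, hx⟩⟩
    · exact .inl rfl
    · exact .inr ⟨x - r, ⟨⟨by omega, by omega⟩, hx⟩, by omega⟩
  · rintro (rfl | ⟨a, ⟨⟨-, ha⟩, hx⟩, rfl⟩)
    · exact ⟨⟨hc, by omega⟩, .inl rfl⟩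
    · exact ⟨⟨by omega, by omega⟩, .inr ⟨by omega, by rwa [Nat.add_sub_cancel]⟩⟩

theorem signedCount_inProgression_of_lt {N : ℕ} (h0 : 0 < N) (hN : N < c) :
    signedCount (InProgression c r) N = 0 := by
  rw [signedCount_of_pos _ h0, filter_inProgression_eq_empty hN, sum_empty, neg_zero]

theorem signedCount_inProgression_add (hc : 0 < c) (hr : 0 < r) (M : ℕ) :
    signedCount (InProgression c r) (M + c) =
      (if r ≤ M then signedCount (InProgression c r) (M - r + c) else 0)
        - signedCount (InProgression c r) M := by
  have hshift : ∑ x ∈ Icc 1 (M + c - r) with InProgression c r x,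
      signedCount (InProgression c r) (M + c - (x + r)) =
        -if r ≤ M then signedCount (InProgression c r) (M - r + c) else 0 := by
    split_ifs with h
    · rw [signedCount_of_pos _ (by omega), neg_neg, show M - r + c = M + c - r by omega]
      exact sum_congr rfl fun x _ => by rw [Nat.sub_add_eq, Nat.sub_right_comm]
    · rw [filter_inProgression_eq_empty (by omega), sum_empty, neg_zero]
  have hc_not_mem :
      c ∉ ({x ∈ Icc 1 (M + c - r) | InProgression c r x}).map (addRightEmbedding r) := by
    simp only [mem_map, mem_filter, addRightEmbedding_apply, not_exists, not_and]
    rintro x ⟨-, hcx, -⟩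
    omega
  rw [signedCount_of_pos _ (by omega), filter_inProgression_add hc hr, sum_insert hc_not_mem,
    sum_map]
  simp only [addRightEmbedding_apply, Nat.add_sub_cancel, hshift]
  ring

end Progression

section SignedBinomialSum

variable {r c : ℕ}

def linearSolutions (r c M : ℕ) : Finset (ℕ × ℕ) :=
  {p ∈ range (M + 1) ×ˢ range (M + 1) | r * p.1 + c * p.2 = M}

theorem mem_linearSolutions (hr : 0 < r) (hc : 0 < c) {M : ℕ} {p : ℕ × ℕ} :
    p ∈ linearSolutions r c M ↔ r * p.1 + c * p.2 = M := by
  simp only [linearSolutions, mem_filter, mem_product, mem_range, and_iff_right_iff_imp]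
  intro h
  constructor <;> nlinarith

theorem linearSolutions_comm (M : ℕ) :
    linearSolutions r c M = (linearSolutions c r M).map (Equiv.prodComm ℕ ℕ).toEmbedding := by
  ext ⟨i, j⟩
  simp [linearSolutions, add_comm, and_comm]

theorem sum_linearSolutions_pred_fst (hr : 0 < r) (hc : 0 < c) (M : ℕ) (f : ℕ × ℕ → ℤ) :
    ∑ p ∈ linearSolutions r c M, (if 0 < p.1 then f (p.1 - 1, p.2) else 0) =
      if r ≤ M then ∑ p ∈ linearSolutions r c (M - r), f p else 0 := by
  rw [← sum_filter]
  split_ifs with h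
  · refine sum_nbij' (fun p => (p.1 - 1, p.2)) (fun p => (p.1 + 1, p.2)) ?_ ?_ ?_ ?_
      fun _ _ => rfl
    · rintro ⟨_ | i, j⟩ hp
      · simp at hp
      · simp only [mem_filter, mem_linearSolutions hr hc, mul_add, add_tsub_cancel_right] at hp ⊢
        omega
    · rintro ⟨i, j⟩ hp
      simp only [mem_filter, mem_linearSolutions hr hc, mul_add] at hp ⊢
      omega
    · rintro ⟨_ | i, j⟩ hp
      · simp at hp
      · simp
    · rintro ⟨i, j⟩ -
      simp
  · refine sum_eq_zero fun p hp => ?_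
    rw [mem_filter, mem_linearSolutions hr hc] at hp
    nlinarith

theorem sum_linearSolutions_pred_snd (hr : 0 < r) (hc : 0 < c) (M : ℕ) (f : ℕ × ℕ → ℤ) :
    ∑ p ∈ linearSolutions r c M, (if 0 < p.2 then f (p.1, p.2 - 1) else 0) =
      if c ≤ M then ∑ p ∈ linearSolutions r c (M - c), f p else 0 := by
  simp only [linearSolutions_comm (r := r), sum_map]
  exact sum_linearSolutions_pred_fst hc hr M fun p => f p.swap

def signedBinomial (p : ℕ × ℕ) : ℤ := (-1) ^ p.2 * (p.1 + p.2).choose p.1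

theorem signedBinomial_succ_succ (i j : ℕ) :
    signedBinomial (i + 1, j + 1) = signedBinomial (i, j + 1) - signedBinomial (i + 1, j) := by
  simp only [signedBinomial]
  rw [show i + 1 + (j + 1) = i + (j + 1) + 1 by ring, Nat.choose_succ_succ',
    show i + (j + 1) = i + 1 + j by ring, pow_succ]
  push_cast
  ring

theorem signedBinomial_eq (p : ℕ × ℕ) :
    signedBinomial p = (if p = 0 then 1 else 0)
      + (if 0 < p.1 then signedBinomial (p.1 - 1, p.2) else 0)
      - (if 0 < p.2 then signedBinomial (p.1, p.2 - 1) else 0) := by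
  rcases p with ⟨_ | i, _ | j⟩
  · simp [signedBinomial]
  · simp [signedBinomial, pow_succ]
  · simp [signedBinomial]
  · simp [signedBinomial_succ_succ]

def signedBinomialSum (r c M : ℕ) : ℤ := ∑ p ∈ linearSolutions r c M, signedBinomial p

theorem signedBinomialSum_eq (hr : 0 < r) (hc : 0 < c) (M : ℕ) :
    signedBinomialSum r c M = (if M = 0 then 1 else 0)
      + (if r ≤ M then signedBinomialSum r c (M - r) else 0)
      - (if c ≤ M then signedBinomialSum r c (M - c) else 0) := by
  have hzero : ∑ p ∈ linearSolutions r c M, (if p = 0 then 1 else 0 : ℤ) =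
      if M = 0 then 1 else 0 := by
    rw [sum_ite_eq']
    simp [mem_linearSolutions hr hc, eq_comm]
  rw [signedBinomialSum, sum_congr rfl fun p _ => signedBinomial_eq p, sum_sub_distrib,
    sum_add_distrib, hzero, sum_linearSolutions_pred_fst hr hc, sum_linearSolutions_pred_snd hr hc]
  rfl

end SignedBinomialSum

theorem signedCount_inProgression_add_eq {c r : ℕ} (hc : 0 < c) (hr : 0 < r) (M : ℕ) :
    signedCount (InProgression c r) (M + c) = signedBinomialSum r c M := by
  induction M using Nat.strong_induction_on with
  | _ M ih =>
  have hM : signedCount (InProgression c r) M =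
      (if c ≤ M then signedBinomialSum r c (M - c) else 0) - if M = 0 then 1 else 0 := by
    rcases Nat.eq_zero_or_pos M with rfl | hM0
    · simp [signedCount_zero, hc.not_ge]
    rcases lt_or_ge M c with hMc | hMc
    · simp [signedCount_inProgression_of_lt hM0 hMc, hMc.not_ge, hM0.ne']
    · rw [if_pos hMc, if_neg hM0.ne', ← ih _ (by omega), Nat.sub_add_cancel hMc, sub_zero]
  have hMr : (if r ≤ M then signedCount (InProgression c r) (M - r + c) else 0) =
      if r ≤ M then signedBinomialSum r c (M - r) else 0 := by
    split_ifs with h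
    · exact ih _ (by omega)
    · rfl
  rw [signedCount_inProgression_add hc hr, hMr, hM, signedBinomialSum_eq hr hc M]
  ring

theorem le_and_modEq_add_iff {k r s x : ℕ} (hs : s < r) :
    k ≤ x ∧ x ≡ k + s [MOD r] ↔ InProgression (k + s) r x := by
  refine ⟨fun ⟨hkx, hx⟩ => ⟨?_, hx⟩, fun ⟨hx, h⟩ => ⟨by omega, h⟩⟩
  by_contra! hlt
  have := Nat.le_of_dvd (by omega) ((Nat.modEq_iff_dvd' hlt.le).1 hx)
  omega

/-- `b_{k,n}^{r,s} = Σ_{ri + j(k+s) = n-1-s} (-1)^j C(i+j, i)`. -/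
theorem signed_munagi_congruence (k n r s : ℕ) (hk : 1 ≤ k) (hn : 1 ≤ n) (hrs : s < r) :
    (countCong k n r s true : ℤ) - countCong k n r s false =
      ∑ p ∈ (Finset.range n ×ˢ Finset.range n).filter
        (fun p : ℕ × ℕ => (r * p.1 + p.2 * (k + s) : ℤ) = (n : ℤ) - 1 - s),
        (-1) ^ p.2 * ((p.1 + p.2).choose p.1 : ℤ) := by
  have hr : 0 < r := by omega
  have hc : 0 < k + s := by omega
  simp only [countCong, if_true, Bool.false_eq_true, if_false]
  rw [card_odd_sub_card_even, signedCount_congr _ fun x => le_and_modEq_add_iff hrs]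
  rcases le_or_gt n s with hns | hns
  · rw [signedCount_inProgression_of_lt (by omega) (by omega), eq_comm]
    refine sum_eq_zero fun p hp => absurd (mem_filter.1 hp).2 ?_
    have : (0 : ℤ) ≤ r * p.1 + p.2 * (k + s) := by positivity
    omega
  obtain ⟨M, rfl⟩ : ∃ M, n = M + s + 1 := ⟨n - s - 1, by omega⟩
  rw [show M + s + 1 + k - 1 = M + (k + s) by omega, signedCount_inProgression_add_eq hc hr]
  refine sum_congr (ext fun p => ?_) fun _ _ => rfl
  rw [mem_linearSolutions hr hc, mem_filter, mem_product, mem_range, mem_range]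
  push_cast
  constructor
  · intro h
    have hz : (r * p.1 + (k + s) * p.2 : ℤ) = M := by exact_mod_cast h
    exact ⟨⟨by nlinarith, by nlinarith⟩, by linear_combination hz⟩
  · rintro ⟨-, h⟩
    zify
    linear_combination h
end

section
/- Fix integers r > s ≥ 0 and set k = r - s. Let b_n be the number of odd-length compositions of n+k-1 with all parts at least k and congruent to k+s modulo r, minus the number of even-length such compositions. Then b_n = 1 if n = s+1 and b_n = 0 otherwise. -/
/-! Auxiliary machinery -/

/-- The merge/split involution on compositions (as lists). -/
private def tog : List ℕ → List ℕ
  | [] => []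
  | a :: t =>
    if a = 1 then
      match t with
      | [] => []
      | b :: t' => (b + 1) :: t'
    else 1 :: (a - 1) :: t

private lemma tog_spec {q : ℕ} (hq : 2 ≤ q) {l : List ℕ} (hpos : ∀ x ∈ l, 0 < x)
    (hsum : l.sum = q) :
    (∀ x ∈ tog l, 0 < x) ∧ (tog l).sum = q ∧ tog (tog l) = l ∧
      ((tog l).length = l.length + 1 ∨ l.length = (tog l).length + 1) := by
  rcases l with _ | ⟨a, t⟩
  · simp at hsum; omega
  · have ha : 0 < a := hpos a (by simp)
    by_cases h1 : a = 1
    · subst h1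
      rcases t with _ | ⟨b, t'⟩
      · simp at hsum; omega
      · have hb : 0 < b := hpos b (by simp)
        have htog : tog (1 :: b :: t') = (b + 1) :: t' := by simp [tog]
        have htog2 : tog ((b + 1) :: t') = 1 :: b :: t' := by
          simp [tog, Nat.succ_ne_zero, show b + 1 ≠ 1 by omega, show b ≠ 0 by omega]
        refine ⟨?_, ?_, ?_, ?_⟩
        · rw [htog]; intro x hx
          rcases List.mem_cons.mp hx with h | h
          · omega
          · exact hpos x (by simp [h])
        · rw [htog]; simp only [List.sum_cons] at hsum ⊢; omega
        · rw [htog, htog2]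
        · right; rw [htog]; simp
    · have htog : tog (a :: t) = 1 :: (a - 1) :: t := by simp [tog, h1]
      have htog2 : tog (1 :: (a - 1) :: t) = a :: t := by
        have : (a - 1) + 1 = a := by omega
        simp [tog, this]
      refine ⟨?_, ?_, ?_, ?_⟩
      · rw [htog]; intro x hx
        rcases List.mem_cons.mp hx with h | h
        · omega
        rcases List.mem_cons.mp h with h | h
        · omega
        · exact hpos x (by simp [h])
      · rw [htog]; simp at hsum ⊢; omega
      · rw [htog, htog2]
      · left; rw [htog]; simp

private lemma card_parity {q : ℕ} (hq : 2 ≤ q) :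
    Nat.card {l : List ℕ // (∀ x ∈ l, 0 < x) ∧ l.sum = q ∧ Odd l.length} =
      Nat.card {l : List ℕ // (∀ x ∈ l, 0 < x) ∧ l.sum = q ∧ Even l.length} := by
  refine Nat.card_congr ⟨fun x => ⟨tog x.1, ?_⟩, fun x => ⟨tog x.1, ?_⟩, ?_, ?_⟩
  · obtain ⟨h1, h2, h3⟩ := x.2
    obtain ⟨p1, p2, _, p4⟩ := tog_spec hq h1 h2
    refine ⟨p1, p2, ?_⟩
    rw [Nat.even_iff]; rw [Nat.odd_iff] at h3; omega
  · obtain ⟨h1, h2, h3⟩ := x.2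
    obtain ⟨p1, p2, _, p4⟩ := tog_spec hq h1 h2
    refine ⟨p1, p2, ?_⟩
    rw [Nat.odd_iff]; rw [Nat.even_iff] at h3; omega
  · intro x
    exact Subtype.ext (tog_spec hq x.2.1 x.2.2.1).2.2.1
  · intro x
    exact Subtype.ext (tog_spec hq x.2.1 x.2.2.1).2.2.1

private lemma eq_singleton_one {l : List ℕ} (hpos : ∀ x ∈ l, 0 < x) (hsum : l.sum = 1) :
    l = [1] := by
  rcases l with _ | ⟨a, t⟩
  · simp at hsum
  · have ha : 0 < a := hpos a (by simp)
    have hts : t.sum = 0 := by simp at hsum; omega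
    have ht : t = [] := by
      rcases t with _ | ⟨b, t'⟩
      · rfl
      · have : 0 < b := hpos b (by simp)
        simp at hts; omega
    subst ht
    simp at hsum
    simp [hsum]

/-- Signed count of compositions of `q` (as lists of positive integers). -/
private lemma key_count {q : ℕ} (hq : 1 ≤ q) :
    (Nat.card {l : List ℕ // (∀ x ∈ l, 0 < x) ∧ l.sum = q ∧ Odd l.length} : ℤ) -
      Nat.card {l : List ℕ // (∀ x ∈ l, 0 < x) ∧ l.sum = q ∧ Even l.length} =
      if q = 1 then 1 else 0 := by
  by_cases h1 : q = 1
  · subst h1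
    have hodd : Nat.card {l : List ℕ // (∀ x ∈ l, 0 < x) ∧ l.sum = 1 ∧ Odd l.length} = 1 := by
      haveI : Unique {l : List ℕ // (∀ x ∈ l, 0 < x) ∧ l.sum = 1 ∧ Odd l.length} :=
        { default := ⟨[1], by simp⟩
          uniq := fun x => Subtype.ext (eq_singleton_one x.2.1 x.2.2.1) }
      exact Nat.card_unique
    have heven : Nat.card {l : List ℕ // (∀ x ∈ l, 0 < x) ∧ l.sum = 1 ∧ Even l.length} = 0 := by
      haveI : IsEmpty {l : List ℕ // (∀ x ∈ l, 0 < x) ∧ l.sum = 1 ∧ Even l.length} := by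
        constructor
        rintro ⟨l, h1, h2, h3⟩
        rw [eq_singleton_one h1 h2] at h3
        simp at h3
      exact Nat.card_of_isEmpty
    rw [hodd, heven]; simp
  · have h2 : 2 ≤ q := by omega
    rw [card_parity h2]
    simp [h1]

private lemma sum_map_div {r : ℕ} (hr : 0 < r) :
    ∀ l : List ℕ, (∀ x ∈ l, r ∣ x) → (l.map (· / r)).sum * r = l.sum := by
  intro l
  induction l with
  | nil => simp
  | cons a t ih =>
    intro h
    simp only [List.map_cons, List.sum_cons, add_mul]
    rw [ih (fun x hx => h x (by simp [hx])), Nat.div_mul_cancel (h a (by simp))]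

private lemma sum_map_mul (r : ℕ) :
    ∀ l : List ℕ, (l.map (· * r)).sum = l.sum * r := by
  intro l
  induction l with
  | nil => simp
  | cons a t ih => simp [ih, add_mul]

/-- Dividing all parts by `r`. -/
private def dEquiv (r q : ℕ) (hr : 0 < r) (P : ℕ → Prop) :
    {l : List ℕ // (∀ x ∈ l, 0 < x ∧ r ∣ x) ∧ l.sum = q * r ∧ P l.length} ≃
      {l : List ℕ // (∀ x ∈ l, 0 < x) ∧ l.sum = q ∧ P l.length} where
  toFun x := ⟨x.1.map (· / r), by
    obtain ⟨h1, h2, h3⟩ := x.2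
    refine ⟨?_, ?_, ?_⟩
    · intro y hy
      obtain ⟨a, ha, rfl⟩ := List.mem_map.mp hy
      exact Nat.div_pos (Nat.le_of_dvd (h1 a ha).1 (h1 a ha).2) hr
    · have := sum_map_div hr x.1 (fun y hy => (h1 y hy).2)
      rw [h2] at this
      exact Nat.eq_of_mul_eq_mul_right hr this
    · rwa [List.length_map]⟩
  invFun x := ⟨x.1.map (· * r), by
    obtain ⟨h1, h2, h3⟩ := x.2
    refine ⟨?_, ?_, ?_⟩
    · intro y hy
      obtain ⟨a, ha, rfl⟩ := List.mem_map.mp hy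
      exact ⟨Nat.mul_pos (h1 a ha) hr, dvd_mul_left r a⟩
    · rw [sum_map_mul, h2]
    · rwa [List.length_map]⟩
  left_inv x := by
    apply Subtype.ext
    simp only [List.map_map]
    have : ∀ y ∈ x.1, ((· * r) ∘ (· / r)) y = id y := fun y hy => by
      simp [Nat.div_mul_cancel (x.2.1 y hy).2]
    rw [List.map_congr_left this, List.map_id]
  right_inv x := by
    apply Subtype.ext
    simp only [List.map_map]
    have : ∀ y ∈ x.1, ((· / r) ∘ (· * r)) y = id y := fun y hy => by
      simp [Nat.mul_div_cancel _ hr]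
    rw [List.map_congr_left this, List.map_id]

/-- From compositions to lists of positive multiples of `r`. -/
private def cEquiv (m k r s : ℕ) (hks : k + s = r) (hk : 0 < k) (P : ℕ → Prop) :
    {c : Composition m // (∀ x ∈ c.blocks, k ≤ x ∧ x ≡ k + s [MOD r]) ∧ P c.length} ≃
      {l : List ℕ // (∀ x ∈ l, 0 < x ∧ r ∣ x) ∧ l.sum = m ∧ P l.length} where
  toFun c := ⟨c.1.blocks, by
    refine ⟨?_, c.1.blocks_sum, c.2.2⟩
    intro x hx
    have hpos := c.1.blocks_pos hx
    have hmod := (c.2.1 x hx).2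
    refine ⟨hpos, ?_⟩
    rw [hks] at hmod
    unfold Nat.ModEq at hmod
    rw [Nat.mod_self] at hmod
    exact Nat.dvd_of_mod_eq_zero hmod⟩
  invFun l := ⟨⟨l.1, fun {x} hx => (l.2.1 x hx).1, l.2.2.1⟩, by
    refine ⟨?_, l.2.2.2⟩
    intro x hx
    obtain ⟨hpos, hdvd⟩ := l.2.1 x hx
    have hr : 0 < r := by omega
    refine ⟨?_, ?_⟩
    · have : r ≤ x := Nat.le_of_dvd hpos hdvd
      omega
    · rw [hks]
      unfold Nat.ModEq
      rw [Nat.mod_self]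
      obtain ⟨c, rfl⟩ := hdvd
      exact Nat.mul_mod_right r c⟩
  left_inv c := rfl
  right_inv l := rfl

/-- For `k = r - s`, the signed count `b_{k,n}^{r,s}` is `1` if `n = s+1` and `0` otherwise. -/
theorem signed_count_k_eq_r_sub_s (r s n : ℕ) (hrs : s < r) (hn : 1 ≤ n) :
    (countCong (r - s) n r s true : ℤ) - countCong (r - s) n r s false =
      if n = s + 1 then 1 else 0 := by
  have hk : 0 < r - s := by omega
  have hks : (r - s) + s = r := by omega
  have hr : 0 < r := by omega
  set m := n + (r - s) - 1 with hm
  have hm1 : 1 ≤ m := by omega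
  have hcount : ∀ p : Bool, countCong (r - s) n r s p =
      Nat.card {l : List ℕ // (∀ x ∈ l, 0 < x ∧ r ∣ x) ∧ l.sum = m ∧
        (if p then Odd l.length else Even l.length)} := by
    intro p
    exact Nat.card_congr
      (cEquiv m (r - s) r s hks hk (fun L => if p then Odd L else Even L))
  rw [hcount true, hcount false]
  by_cases hdvd : r ∣ m
  · obtain ⟨q, hq⟩ := hdvd
    have hq' : m = q * r := by rw [hq]; ring
    have hq1 : 1 ≤ q := by
      rcases Nat.eq_zero_or_pos q with h | h
      · rw [h] at hq'; omega
      · exact h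
    have hcard : ∀ p : Bool,
        Nat.card {l : List ℕ // (∀ x ∈ l, 0 < x ∧ r ∣ x) ∧ l.sum = m ∧
          (if p then Odd l.length else Even l.length)} =
        Nat.card {l : List ℕ // (∀ x ∈ l, 0 < x) ∧ l.sum = q ∧
          (if p then Odd l.length else Even l.length)} := by
      intro p
      rw [hq']
      exact Nat.card_congr (dEquiv r q hr (fun L => if p then Odd L else Even L))
    rw [hcard true, hcard false]
    have hiff : q = 1 ↔ n = s + 1 := by
      constructor
      · intro h; rw [h] at hq'; omega
      · intro h
        have : m = r := by omega
        rw [this] at hq'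
        have : q * r = 1 * r := by omega
        exact Nat.eq_of_mul_eq_mul_right hr this
    simp only [Bool.false_eq_true, reduceIte]
    rw [key_count hq1]
    simp only [hiff]
  · have hempty : ∀ p : Bool,
        IsEmpty {l : List ℕ // (∀ x ∈ l, 0 < x ∧ r ∣ x) ∧ l.sum = m ∧
          (if p then Odd l.length else Even l.length)} := by
      intro p
      constructor
      rintro ⟨l, h1, h2, h3⟩
      exact hdvd (h2 ▸ List.dvd_sum (fun x hx => (h1 x hx).2))
    rw [@Nat.card_of_isEmpty _ (hempty true), @Nat.card_of_isEmpty _ (hempty false)]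
    have hne : n ≠ s + 1 := by
      intro h
      apply hdvd
      have : m = r := by omega
      rw [this]
    simp [hne]
end

section
/- Fix integers r > s ≥ 0 and set k = 2r - s. Let b_n be the number of odd-length compositions of n+k-1 with all parts at least k and congruent to k+s modulo r, minus the number of even-length such compositions. Then b_n = (-1)^j if n = 3rj + s + 1 or n = 3rj + r + s + 1 for some integer j ≥ 0, and b_n = 0 otherwise. -/
namespace SCAux

/-- Lists summing to `N` with parts multiples of `r`, at least `2r`, length satisfying `pr`. -/
abbrev LSub (r N : ℕ) (pr : ℕ → Prop) :=
  {l : List ℕ // l.sum = N ∧ (∀ x ∈ l, 2 * r ≤ x ∧ r ∣ x) ∧ pr l.length}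

lemma finite_lsub (r N : ℕ) (hr : 1 ≤ r) (pr : ℕ → Prop) : Finite (LSub r N pr) := by
  apply Finite.of_injective
    (fun l => (⟨l.1, by intro i hi; have := l.2.2.1 i hi; omega, l.2.1⟩ : Composition N))
  intro a b h
  exact Subtype.ext (congrArg Composition.blocks h)

lemma cond_iff (r s x : ℕ) (hrs : s < r) :
    ((2 * r - s ≤ x) ∧ x ≡ (2 * r - s) + s [MOD r]) ↔ (2 * r ≤ x ∧ r ∣ x) := by
  have h2 : (2 * r - s) + s = 2 * r := by omega
  rw [h2]
  have hmod : x ≡ 2 * r [MOD r] ↔ r ∣ x := by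
    unfold Nat.ModEq
    rw [Nat.mul_mod_left]
    exact Nat.dvd_iff_mod_eq_zero.symm
  rw [hmod]
  constructor
  · rintro ⟨h1, m, rfl⟩
    refine ⟨?_, m, rfl⟩
    have hm : 2 ≤ m := by
      by_contra h'
      push_neg at h'
      interval_cases m <;> omega
    calc 2 * r = r * 2 := by ring
    _ ≤ r * m := Nat.mul_le_mul_left r hm
  · rintro ⟨h1, h2⟩
    exact ⟨by omega, h2⟩

/-- `countCong` expressed via lists. -/
lemma countCong_eq (r s n : ℕ) (hrs : s < r) (p : Bool) :
    countCong (2 * r - s) n r s p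
      = Nat.card (LSub r (n + (2 * r - s) - 1)
          (fun L => if p then Odd L else Even L)) := by
  apply Nat.card_congr
  refine ⟨fun c => ⟨c.1.blocks, c.1.blocks_sum, ?_, ?_⟩,
    fun l => ⟨⟨l.1, ?_, l.2.1⟩, ?_, ?_⟩, ?_, ?_⟩
  · intro x hx
    exact (cond_iff r s x hrs).1 (c.2.1 x hx)
  · exact c.2.2
  · intro i hi
    have := l.2.2.1 i hi; omega
  · intro x hx
    exact (cond_iff r s x hrs).2 (l.2.2.1 x hx)
  · exact l.2.2.2
  · intro c; rfl
  · intro l; rfl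

lemma dvd_three_le {r a : ℕ} (hr : 1 ≤ r) (hd : r ∣ a) (h : 2 * r < a) : 3 * r ≤ a := by
  obtain ⟨m, rfl⟩ := hd
  have hm : 3 ≤ m := by
    by_contra h'
    push_neg at h'
    interval_cases m <;> omega
  calc 3 * r = r * 3 := by ring
  _ ≤ r * m := Nat.mul_le_mul_left r hm

def splitEquiv (r N : ℕ) (hr : 1 ≤ r) (hN : 2 * r ≤ N) (pr : ℕ → Prop) :
    LSub r N pr ≃ (LSub r (N - 2 * r) (fun L => pr (L + 1)) ⊕ LSub r (N - r) pr) where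
  toFun l :=
    match l with
    | ⟨[], h⟩ => absurd h.1 (by simp; omega)
    | ⟨a :: t, h⟩ =>
      if ha : a = 2 * r then
        Sum.inl ⟨t, by
          obtain ⟨h1, h2, h3⟩ := h
          simp only [List.sum_cons] at h1
          refine ⟨by omega, fun x hx => h2 x (List.mem_cons_of_mem a hx), by
            simpa using h3⟩⟩
      else
        Sum.inr ⟨(a - r) :: t, by
          obtain ⟨h1, h2, h3⟩ := h
          have ha2 := h2 a (List.mem_cons_self)
          have ha3 : 3 * r ≤ a := dvd_three_le hr ha2.2 (by omega)
          simp only [List.sum_cons] at h1 ⊢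
          refine ⟨by omega, ?_, by simpa using h3⟩
          intro x hx
          rcases List.mem_cons.1 hx with rfl | hx
          · exact ⟨by omega, Nat.dvd_sub ha2.2 dvd_rfl⟩
          · exact h2 x (List.mem_cons_of_mem a hx)⟩
  invFun x :=
    match x with
    | Sum.inl ⟨l, h⟩ => ⟨2 * r :: l, by
        obtain ⟨h1, h2, h3⟩ := h
        simp only [List.sum_cons]
        refine ⟨by omega, ?_, by simpa using h3⟩
        intro x hx
        rcases List.mem_cons.1 hx with rfl | hx
        · exact ⟨le_refl _, dvd_mul_left r 2⟩
        · exact h2 x hx⟩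
    | Sum.inr ⟨[], h⟩ => absurd h.1 (by simp; omega)
    | Sum.inr ⟨a :: t, h⟩ => ⟨(a + r) :: t, by
        obtain ⟨h1, h2, h3⟩ := h
        have ha2 := h2 a (List.mem_cons_self)
        simp only [List.sum_cons] at h1 ⊢
        refine ⟨by omega, ?_, by simpa using h3⟩
        intro x hx
        rcases List.mem_cons.1 hx with rfl | hx
        · exact ⟨by omega, Nat.dvd_add ha2.2 dvd_rfl⟩
        · exact h2 x (List.mem_cons_of_mem a hx)⟩
  left_inv := by
    rintro ⟨(_ | ⟨a, t⟩), h⟩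
    · exact absurd h.1 (by simp; omega)
    · by_cases ha : a = 2 * r
      · simp only [ha, dif_pos]
      · have ha2 := h.2.1 a (List.mem_cons_self)
        have ha3 : 3 * r ≤ a := dvd_three_le hr ha2.2 (by omega)
        simp only [dif_neg ha]
        congr 1
        simp only [List.cons.injEq]
        exact ⟨by omega, trivial⟩
  right_inv := by
    rintro (⟨l, h⟩ | ⟨(_ | ⟨a, t⟩), h⟩)
    · show dite _ _ _ = _
      rw [dif_pos rfl]
    · exact absurd h.1 (by simp; omega)
    · have ha2 := h.2.1 a (List.mem_cons_self)
      have hne : ¬ (a + r = 2 * r) := by omega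
      show dite _ _ _ = _
      rw [dif_neg hne]
      have hr' : a + r - r = a := by omega
      congr 1
      exact Subtype.ext (by simp [hr'])

lemma card_split (r N : ℕ) (hr : 1 ≤ r) (hN : 2 * r ≤ N) (pr : ℕ → Prop) :
    Nat.card (LSub r N pr)
      = Nat.card (LSub r (N - 2 * r) (fun L => pr (L + 1)))
        + Nat.card (LSub r (N - r) pr) := by
  haveI := finite_lsub r (N - 2 * r) hr (fun L => pr (L + 1))
  haveI := finite_lsub r (N - r) hr pr
  rw [← Nat.card_sum]
  exact Nat.card_congr (splitEquiv r N hr hN pr)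

/-- The signed count: odd-length minus even-length. -/
noncomputable def bN (r N : ℕ) : ℤ :=
  (Nat.card (LSub r N (fun L => Odd L)) : ℤ) - Nat.card (LSub r N (fun L => Even L))

lemma card_shift_odd (r M : ℕ) :
    Nat.card (LSub r M (fun L => Odd (L + 1))) = Nat.card (LSub r M (fun L => Even L)) :=
  Nat.card_congr (Equiv.subtypeEquivRight (by
    intro l
    simp [Nat.odd_add_one, Nat.not_odd_iff_even, and_assoc]))

lemma card_shift_even (r M : ℕ) :
    Nat.card (LSub r M (fun L => Even (L + 1))) = Nat.card (LSub r M (fun L => Odd L)) :=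
  Nat.card_congr (Equiv.subtypeEquivRight (by
    intro l
    simp [Nat.even_add_one, Nat.not_even_iff_odd, and_assoc]))

lemma bN_rec (r N : ℕ) (hr : 1 ≤ r) (hN : 2 * r ≤ N) :
    bN r N = bN r (N - r) - bN r (N - 2 * r) := by
  unfold bN
  rw [card_split r N hr hN (fun L => Odd L), card_split r N hr hN (fun L => Even L),
    card_shift_odd, card_shift_even]
  push_cast
  ring

lemma isEmpty_small (r N : ℕ) (h1 : 1 ≤ N) (h2 : N < 2 * r) (pr : ℕ → Prop) :
    IsEmpty (LSub r N pr) := by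
  constructor
  rintro ⟨(_ | ⟨a, t⟩), hsum, hall, hpr⟩
  · simp at hsum; omega
  · have ha := hall a (List.mem_cons_self)
    have : a ≤ (a :: t).sum := List.single_le_sum (fun x _ => Nat.zero_le x) a
      (List.mem_cons_self)
    omega

lemma isEmpty_not_dvd (r N : ℕ) (hnd : ¬ r ∣ N) (pr : ℕ → Prop) :
    IsEmpty (LSub r N pr) := by
  constructor
  rintro ⟨l, hsum, hall, hpr⟩
  exact hnd (hsum ▸ List.dvd_sum (fun x hx => (hall x hx).2))

lemma bN_small (r N : ℕ) (h1 : 1 ≤ N) (h2 : N < 2 * r) : bN r N = 0 := by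
  unfold bN
  haveI := isEmpty_small r N h1 h2 (fun L => Odd L)
  haveI := isEmpty_small r N h1 h2 (fun L => Even L)
  simp

lemma bN_not_dvd (r N : ℕ) (hnd : ¬ r ∣ N) : bN r N = 0 := by
  unfold bN
  haveI := isEmpty_not_dvd r N hnd (fun L => Odd L)
  haveI := isEmpty_not_dvd r N hnd (fun L => Even L)
  simp

lemma eq_nil_of_sum_zero (r : ℕ) (hr : 1 ≤ r) (l : List ℕ)
    (hsum : l.sum = 0) (hall : ∀ x ∈ l, 2 * r ≤ x ∧ r ∣ x) : l = [] := by
  cases l with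
  | nil => rfl
  | cons a t =>
    have ha := hall a (List.mem_cons_self)
    have : a ≤ (a :: t).sum := List.single_le_sum (fun x _ => Nat.zero_le x) a
      (List.mem_cons_self)
    omega

lemma bN_zero (r : ℕ) (hr : 1 ≤ r) : bN r 0 = -1 := by
  unfold bN
  haveI : IsEmpty (LSub r 0 (fun L => Odd L)) := by
    constructor
    rintro ⟨l, hsum, hall, hpr⟩
    rw [eq_nil_of_sum_zero r hr l hsum hall] at hpr
    simp at hpr
  haveI : Unique (LSub r 0 (fun L => Even L)) := by
    refine ⟨⟨⟨[], by simp⟩⟩, ?_⟩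
    rintro ⟨l, hsum, hall, hpr⟩
    exact Subtype.ext (eq_nil_of_sum_zero r hr l hsum hall)
  rw [Nat.card_of_isEmpty, Nat.card_unique]
  simp

/-- The periodic sequence `bN r (j*r) = E j`. -/
def E (j : ℕ) : ℤ :=
  if j % 6 = 0 then -1 else if j % 6 = 1 then 0 else if j % 6 = 2 then 1
  else if j % 6 = 3 then 1 else if j % 6 = 4 then 0 else -1

lemma E_rec (j : ℕ) (hj : 2 ≤ j) : E j = E (j - 1) - E (j - 2) := by
  rcases (by omega : j % 6 = 0 ∨ j % 6 = 1 ∨ j % 6 = 2 ∨ j % 6 = 3 ∨ j % 6 = 4 ∨ j % 6 = 5)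
    with h | h | h | h | h | h
  · have h1 : (j - 1) % 6 = 5 := by omega
    have h2 : (j - 2) % 6 = 4 := by omega
    rw [E, E, E, h, h1, h2]
    norm_num
  · have h1 : (j - 1) % 6 = 0 := by omega
    have h2 : (j - 2) % 6 = 5 := by omega
    rw [E, E, E, h, h1, h2]
    norm_num
  · have h1 : (j - 1) % 6 = 1 := by omega
    have h2 : (j - 2) % 6 = 0 := by omega
    rw [E, E, E, h, h1, h2]
    norm_num
  · have h1 : (j - 1) % 6 = 2 := by omega
    have h2 : (j - 2) % 6 = 1 := by omega
    rw [E, E, E, h, h1, h2]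
    norm_num
  · have h1 : (j - 1) % 6 = 3 := by omega
    have h2 : (j - 2) % 6 = 2 := by omega
    rw [E, E, E, h, h1, h2]
    norm_num
  · have h1 : (j - 1) % 6 = 4 := by omega
    have h2 : (j - 2) % 6 = 3 := by omega
    rw [E, E, E, h, h1, h2]
    norm_num

lemma b_at_mul (r : ℕ) (hr : 1 ≤ r) : ∀ j, bN r (j * r) = E j := by
  intro j
  induction j using Nat.strong_induction_on with
  | _ j ih =>
    by_cases hj0 : j = 0
    · subst hj0
      rw [Nat.zero_mul, bN_zero r hr, E]
      norm_num
    by_cases hj1 : j = 1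
    · subst hj1
      rw [Nat.one_mul, bN_small r r hr (by omega), E]
      norm_num
    have h2 : 2 ≤ j := by omega
    have hN : 2 * r ≤ j * r := Nat.mul_le_mul_right r h2
    rw [bN_rec r (j * r) hr hN]
    have e1 : j * r - r = (j - 1) * r := by
      rw [Nat.sub_mul, Nat.one_mul]
    have e2 : j * r - 2 * r = (j - 2) * r := by
      rw [Nat.sub_mul]
    rw [e1, e2, ih (j - 1) (by omega), ih (j - 2) (by omega), E_rec j h2]

lemma card_if_true (r N : ℕ) :
    Nat.card (LSub r N (fun L => if (true : Bool) then Odd L else Even L))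
      = Nat.card (LSub r N (fun L => Odd L)) :=
  Nat.card_congr (Equiv.subtypeEquivRight (by intro l; simp))

lemma card_if_false (r N : ℕ) :
    Nat.card (LSub r N (fun L => if (false : Bool) then Odd L else Even L))
      = Nat.card (LSub r N (fun L => Even L)) :=
  Nat.card_congr (Equiv.subtypeEquivRight (by intro l; simp))

lemma bridge (r s n : ℕ) (hrs : s < r) :
    (countCong (2 * r - s) n r s true : ℤ) - countCong (2 * r - s) n r s false
      = bN r (n + (2 * r - s) - 1) := by
  rw [countCong_eq r s n hrs true, countCong_eq r s n hrs false,
    card_if_true, card_if_false]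
  rfl

end SCAux

open SCAux in
/-- For `k = 2r - s`, the signed count `b_n` equals `(-1)^j` when `n = 3rj + s + 1` or
`n = 3rj + r + s + 1` for some `j ≥ 0`, and `0` otherwise. -/
theorem signed_count_periodic (r s n : ℕ) (hrs : s < r) (hn : 1 ≤ n) :
    (∀ j : ℕ, (n = 3 * r * j + s + 1 ∨ n = 3 * r * j + r + s + 1) →
      (countCong (2 * r - s) n r s true : ℤ) - countCong (2 * r - s) n r s false = (-1) ^ j) ∧
    ((¬ ∃ j : ℕ, n = 3 * r * j + s + 1 ∨ n = 3 * r * j + r + s + 1) →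
      (countCong (2 * r - s) n r s true : ℤ) - countCong (2 * r - s) n r s false = 0) := by
  have hr : 1 ≤ r := by omega
  rw [bridge r s n hrs]
  constructor
  · rintro j (hnj | hnj)
    · have hNr : n + (2 * r - s) - 1 = (3 * j + 2) * r := by
        have h1 : (3 * j + 2) * r = 3 * (r * j) + 2 * r := by ring
        have h3 : 3 * r * j = 3 * (r * j) := by ring
        omega
      rw [hNr, b_at_mul r hr (3 * j + 2)]
      rcases Nat.even_or_odd j with ⟨m, rfl⟩ | ⟨m, rfl⟩
      · have hm : (3 * (m + m) + 2) % 6 = 2 := by omega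
        rw [E, hm]
        norm_num
      · have hm : (3 * (2 * m + 1) + 2) % 6 = 5 := by omega
        rw [E, hm]
        norm_num
        exact (Odd.neg_one_pow ⟨m, rfl⟩).symm
    · have hNr : n + (2 * r - s) - 1 = (3 * j + 3) * r := by
        have h1 : (3 * j + 3) * r = 3 * (r * j) + 3 * r := by ring
        have h3 : 3 * r * j = 3 * (r * j) := by ring
        omega
      rw [hNr, b_at_mul r hr (3 * j + 3)]
      rcases Nat.even_or_odd j with ⟨m, rfl⟩ | ⟨m, rfl⟩
      · have hm : (3 * (m + m) + 3) % 6 = 3 := by omega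
        rw [E, hm]
        norm_num
      · have hm : (3 * (2 * m + 1) + 3) % 6 = 0 := by omega
        rw [E, hm]
        norm_num
        exact (Odd.neg_one_pow ⟨m, rfl⟩).symm
  · intro hno
    set N := n + (2 * r - s) - 1 with hNdef
    have hN1 : r + 1 ≤ N := by omega
    by_cases hd : r ∣ N
    · obtain ⟨m, hm⟩ := hd
      have hm2 : 2 ≤ m := by
        by_contra h'
        push_neg at h'
        interval_cases m <;> omega
      have hm' : N = m * r := by rw [hm]; ring
      rw [hm', b_at_mul r hr m]
      have hmod3 : m % 3 = 1 := by
        by_contra h3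
        rcases (by omega : m % 3 = 0 ∨ m % 3 = 2) with h | h
        · obtain ⟨j, hj⟩ : ∃ j, m = 3 * j + 3 := ⟨m / 3 - 1, by omega⟩
          apply hno
          refine ⟨j, Or.inr ?_⟩
          have h1 : m * r = 3 * (r * j) + 3 * r := by rw [hj]; ring
          have h4 : 3 * r * j = 3 * (r * j) := by ring
          omega
        · obtain ⟨j, hj⟩ : ∃ j, m = 3 * j + 2 := ⟨m / 3, by omega⟩
          apply hno
          refine ⟨j, Or.inl ?_⟩
          have h1 : m * r = 3 * (r * j) + 2 * r := by rw [hj]; ring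
          have h4 : 3 * r * j = 3 * (r * j) := by ring
          omega
      rcases (by omega : m % 6 = 1 ∨ m % 6 = 4) with h | h <;>
      · rw [E, h]; norm_num
    · exact bN_not_dvd r N hd
end

section
/- The difference between the number of partitions of n into an even number of distinct parts and the number of partitions of n into an odd number of distinct parts equals (-1)^j if n = j(3j+1)/2 or n = j(3j-1)/2 for some integer j ≥ 0, and equals 0 otherwise. -/
/-!
Give a partition into distinct parts the weight `(-1)^(number of parts)` and every other
partition the weight `0`. The weighted generating function is `∏ (1 - X^k)`, so the signed
count of the theorem is the `n`-th coefficient of that product, which Euler's pentagonal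
number theorem (`PowerSeries.WithPiTopology.hasProd_one_sub_X_pow`) identifies with
`∑ (-1)^k X^(k(3k-1)/2)`, the sum running over all `k ∈ ℤ`.
-/

open PowerSeries Finset
open scoped PowerSeries.WithPiTopology

namespace Nat.Partition

lemma prod_toFinsupp_ite_eq_one_neg_one {R : Type*} [CommRing R] {n : ℕ} (p : n.Partition) :
    p.parts.toFinsupp.prod (fun _ c ↦ if c = 1 then (-1 : R) else 0) =
      if p.parts.Nodup then (-1) ^ p.parts.card else 0 := by
  rw [Finsupp.prod, prod_ite_zero, Multiset.toFinsupp_support]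
  simp only [Multiset.toFinsupp_apply, Multiset.mem_toFinset, prod_const,
    ← Multiset.nodup_iff_count_eq_one]
  split_ifs with h
  · rw [Multiset.toFinset_card_of_nodup h]
  · rfl

theorem genFun_ite_eq_one_neg_one (R : Type*) [CommRing R] :
    genFun (fun _ c ↦ if c = 1 then (-1 : R) else 0) = pentagonalSeries R := by
  -- Any topology on `R` will do; the discrete one makes `R⟦X⟧` Hausdorff, so products are unique.
  let _ : TopologicalSpace R := ⊥
  have : DiscreteTopology R := ⟨rfl⟩
  refine (hasProd_genFun _).unique ?_
  convert! WithPiTopology.hasProd_one_sub_X_pow R using 2 with i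
  rw [tsum_eq_single 0 fun j hj ↦ by simp [hj]]
  simp [sub_eq_add_neg]

theorem sum_ite_nodup_neg_one_pow (n : ℕ) :
    ∑ p : n.Partition, (if p.parts.Nodup then (-1 : ℤ) ^ p.parts.card else 0) =
      (Nat.card {p : n.Partition // p.parts.Nodup ∧ Even p.parts.card} : ℤ) -
        Nat.card {p : n.Partition // p.parts.Nodup ∧ Odd p.parts.card} := by
  simp only [Nat.card_eq_fintype_card, Fintype.card_subtype]
  rw [← sum_filter, ← sum_filter_add_sum_filter_not _ (fun p ↦ Even p.parts.card),
    filter_filter, filter_filter]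
  simp only [Nat.not_even_iff_odd]
  rw [sum_eq_card_nsmul fun p hp ↦ (mem_filter.1 hp).2.2.neg_one_pow,
    sum_eq_card_nsmul fun p hp ↦ (mem_filter.1 hp).2.2.neg_one_pow]
  simp [sub_eq_add_neg]

theorem coeff_pentagonalSeries_eq_card_sub_card (n : ℕ) :
    (pentagonalSeries ℤ).coeff n =
      (Nat.card {p : n.Partition // p.parts.Nodup ∧ Even p.parts.card} : ℤ) -
        Nat.card {p : n.Partition // p.parts.Nodup ∧ Odd p.parts.card} := by
  rw [← genFun_ite_eq_one_neg_one, coeff_genFun, ← sum_ite_nodup_neg_one_pow]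
  simp_rw [prod_toFinsupp_ite_eq_one_neg_one]

end Nat.Partition

lemma pentagonal_natCast_eq_iff {n j : ℕ} : pentagonal j = n ↔ 2 * n = j * (3 * j - 1) := by
  have := two_mul_natCast_pentagonal (j : ℤ)
  rcases j.eq_zero_or_pos with rfl | hj
  · simp_all [eq_comm]
  · zify [show 1 ≤ 3 * j by omega]
    omega

lemma pentagonal_neg_natCast_eq_iff {n j : ℕ} :
    pentagonal (-j) = n ↔ 2 * n = j * (3 * j + 1) := by
  have := two_mul_natCast_pentagonal_neg (j : ℤ)
  zify
  omega

lemma exists_two_mul_eq_of_pentagonal_eq {n : ℕ} {k : ℤ} (h : pentagonal k = n) :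
    ∃ j : ℕ, 2 * n = j * (3 * j + 1) ∨ 2 * n = j * (3 * j - 1) := by
  obtain ⟨j, rfl | rfl⟩ := k.eq_nat_or_neg
  exacts [⟨j, .inr (pentagonal_natCast_eq_iff.1 h)⟩, ⟨j, .inl (pentagonal_neg_natCast_eq_iff.1 h)⟩]

/-- Legendre's theorem (Euler's pentagonal number theorem): the number of partitions of
`n` into an even number of distinct parts minus the number into an odd number of distinct
parts is `(-1)^j` if `n = j(3j±1)/2` for some `j ≥ 0`, and `0` otherwise. -/
theorem legendre_pentagonal (n : ℕ) :
    (∀ j : ℕ, (2 * n = j * (3 * j + 1) ∨ 2 * n = j * (3 * j - 1)) →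
      (Nat.card {p : Nat.Partition n // p.parts.Nodup ∧ Even p.parts.card} : ℤ) -
        Nat.card {p : Nat.Partition n // p.parts.Nodup ∧ Odd p.parts.card} = (-1) ^ j) ∧
    ((¬ ∃ j : ℕ, 2 * n = j * (3 * j + 1) ∨ 2 * n = j * (3 * j - 1)) →
      (Nat.card {p : Nat.Partition n // p.parts.Nodup ∧ Even p.parts.card} : ℤ) -
        Nat.card {p : Nat.Partition n // p.parts.Nodup ∧ Odd p.parts.card} = 0) := by
  rw [← Nat.Partition.coeff_pentagonalSeries_eq_card_sub_card]
  refine ⟨fun j hj ↦ ?_, fun hn ↦ ?_⟩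
  · obtain h | h := hj
    · rw [← pentagonal_neg_natCast_eq_iff.2 h, coeff_pentagonalSeries_pentagonal,
        Int.negOnePow_neg, Int.coe_negOnePow_natCast, Int.cast_id]
    · rw [← pentagonal_natCast_eq_iff.2 h, coeff_pentagonalSeries_pentagonal,
        Int.coe_negOnePow_natCast, Int.cast_id]
  · exact coeff_pentagonalSeries_eq_zero ℤ fun ⟨k, hk⟩ ↦ hn (exists_two_mul_eq_of_pentagonal_eq hk)
end

section
/- For integers k ≥ 1, n ≥ 1, m ≥ 0, let b̄ be the number of odd-length compositions of n+k-1 with exactly m parts less than k, minus the number of even-length such compositions. Then b̄ = Σ (-1)^{i+ℓ+1} C(i+j-1,j) C(i,m) C(m,ℓ), where the sum is over nonnegative integers i, j, ℓ with i + j + (k-1)(ℓ + i - m - 1) = n. -/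
open Finset


lemma card_adt (i j : ℕ) : (Finset.Nat.antidiagonalTuple i j).card = Nat.multichoose i j := by
  induction i generalizing j with
  | zero =>
    cases j with
    | zero => simp [Finset.Nat.antidiagonalTuple_zero_zero]
    | succ j => simp [Finset.Nat.antidiagonalTuple_zero_succ, Nat.multichoose_zero_succ]
  | succ i ih =>
    induction j with
    | zero => simp [Finset.Nat.antidiagonalTuple_zero_right]
    | succ j ihj =>
      classical
      rw [Nat.multichoose_succ_succ, ← ih (j+1), ← ihj]
      -- split on f 0 = 0
      rw [← Finset.card_filter_add_card_filter_not
            (p := fun f : Fin (i+1) → ℕ => f 0 = 0) (s := Finset.Nat.antidiagonalTuple (i+1) (j+1))]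
      congr 1
      · -- f 0 = 0 : biject with antidiagonalTuple i (j+1) via tail/cons
        apply Finset.card_nbij' (i := fun f => Fin.tail f) (j := fun g => Fin.cons 0 g)
        · intro f hf
          simp only [Finset.mem_coe, Finset.mem_filter, Finset.Nat.mem_antidiagonalTuple] at hf ⊢
          rw [← hf.1, Fin.sum_univ_succ, hf.2, zero_add]
          rfl
        · intro g hg
          simp only [Finset.mem_coe, Finset.mem_filter, Finset.Nat.mem_antidiagonalTuple] at hg ⊢
          constructor
          · rw [Fin.sum_univ_succ]; simpa using hg
          · simp
        · intro f hf
          simp only [Finset.mem_coe, Finset.mem_filter] at hf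
          funext t
          rcases Fin.eq_zero_or_eq_succ t with h | ⟨s, rfl⟩
          · subst h; exact hf.2.symm
          · simp [Fin.tail]
        · intro g hg
          funext t; simp [Fin.tail]
      · -- f 0 ≠ 0 : biject with antidiagonalTuple (i+1) j via subtract 1 at 0
        apply Finset.card_nbij' (i := fun f => Function.update f 0 (f 0 - 1))
          (j := fun g => Function.update g 0 (g 0 + 1))
        · intro f hf
          simp only [Finset.mem_coe, Finset.mem_filter, Finset.Nat.mem_antidiagonalTuple] at hf ⊢
          obtain ⟨hsum, hne⟩ := hf
          rw [Fin.sum_univ_succ] at hsum ⊢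
          simp only [Function.update_self]
          have : ∀ s : Fin i, Function.update f 0 (f 0 - 1) s.succ = f s.succ := by
            intro s; apply Function.update_of_ne; exact (Fin.succ_ne_zero s)
          rw [Finset.sum_congr rfl (fun s _ => this s)]
          omega
        · intro g hg
          simp only [Finset.mem_coe, Finset.mem_filter, Finset.Nat.mem_antidiagonalTuple] at hg ⊢
          rw [Fin.sum_univ_succ] at hg ⊢
          have : ∀ s : Fin i, Function.update g 0 (g 0 + 1) s.succ = g s.succ := by
            intro s; apply Function.update_of_ne; exact (Fin.succ_ne_zero s)
          rw [Finset.sum_congr rfl (fun s _ => this s)]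
          simp only [Function.update_self]
          exact ⟨by omega, by simp⟩
        · intro f hf
          simp only [Finset.mem_coe, Finset.mem_filter] at hf
          funext t
          rcases Fin.eq_zero_or_eq_succ t with h | ⟨s, rfl⟩
          · subst h; simp; omega
          · simp [Function.update_of_ne (Fin.succ_ne_zero s)]
        · intro g hg
          funext t
          rcases Fin.eq_zero_or_eq_succ t with h | ⟨s, rfl⟩
          · subst h; simp
          · simp [Function.update_of_ne (Fin.succ_ne_zero s)]

lemma card_shift (i N : ℕ) (b : Fin i → ℕ) :
    ((Finset.Nat.antidiagonalTuple i N).filter (fun f => ∀ t, b t ≤ f t)).card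
      = if (∑ t, b t) ≤ N then Nat.multichoose i (N - ∑ t, b t) else 0 := by
  classical
  split_ifs with h
  · rw [← card_adt]
    apply Finset.card_nbij' (i := fun f => f - b) (j := fun g => g + b)
    · intro f hf
      simp only [Finset.mem_coe, Finset.mem_filter, Finset.Nat.mem_antidiagonalTuple] at hf ⊢
      obtain ⟨hsum, hle⟩ := hf
      have : ∀ t, (f - b) t = f t - b t := fun t => rfl
      rw [Finset.sum_congr rfl (fun t _ => this t), ← hsum,
        Finset.sum_tsub_distrib _ (fun t _ => hle t)]
    · intro g hg
      simp only [Finset.mem_coe, Finset.mem_filter, Finset.Nat.mem_antidiagonalTuple] at hg ⊢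
      constructor
      · have : ∀ t, (g + b) t = g t + b t := fun t => rfl
        rw [Finset.sum_congr rfl (fun t _ => this t), Finset.sum_add_distrib, hg]
        omega
      · intro t; simp [Pi.add_apply]
    · intro f hf
      simp only [Finset.mem_coe, Finset.mem_filter] at hf
      funext t
      have := hf.2 t
      simp only [Pi.add_apply, Pi.sub_apply]
      omega
    · intro g hg
      funext t
      simp only [Pi.add_apply, Pi.sub_apply]
      omega
  · rw [Finset.card_eq_zero, Finset.filter_eq_empty_iff]
    intro f hf
    rw [Finset.Nat.mem_antidiagonalTuple] at hf
    intro hle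
    exact h (hf ▸ Finset.sum_le_sum (fun t _ => hle t))

lemma sum_ite_mem_card {i : ℕ} (kk : ℕ) (hk : 1 ≤ kk) (B : Finset (Fin i)) :
    (∑ t : Fin i, if t ∈ B then kk else 1) = i + (kk-1) * B.card := by
  have h1 : ∀ t : Fin i, (if t ∈ B then kk else 1) = 1 + (if t ∈ B then kk - 1 else 0) := by
    intro t; split_ifs <;> omega
  rw [Finset.sum_congr rfl (fun t _ => h1 t), Finset.sum_add_distrib,
    Finset.sum_ite_mem, Finset.univ_inter, Finset.sum_const, smul_eq_mul]
  simp [mul_comm]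

lemma card_ge (i N kk : ℕ) (hk : 1 ≤ kk) (B : Finset (Fin i)) :
    ((Finset.Nat.antidiagonalTuple i N).filter
        (fun f => (∀ t, 0 < f t) ∧ ∀ t ∈ B, kk ≤ f t)).card
      = if i + (kk-1) * B.card ≤ N then Nat.multichoose i (N - (i + (kk-1) * B.card)) else 0 := by
  classical
  have hfe : ((Finset.Nat.antidiagonalTuple i N).filter
        (fun f => (∀ t, 0 < f t) ∧ ∀ t ∈ B, kk ≤ f t))
      = ((Finset.Nat.antidiagonalTuple i N).filter
        (fun f => ∀ t, (fun t => if t ∈ B then kk else 1) t ≤ f t)) := by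
    apply Finset.filter_congr
    intro f _
    simp only
    constructor
    · rintro ⟨h1, h2⟩ t
      split_ifs with ht
      · exact h2 t ht
      · exact h1 t
    · intro h
      refine ⟨fun t => ?_, fun t ht => ?_⟩
      · have := h t; split_ifs at this <;> omega
      · have := h t; rwa [if_pos ht] at this
  rw [hfe, card_shift, sum_ite_mem_card kk hk]


def PosT (NN i : ℕ) : Finset (Fin i → ℕ) :=
  (Finset.Nat.antidiagonalTuple i NN).filter (fun f => ∀ t, 0 < f t)

lemma mem_PosT {NN i : ℕ} {f : Fin i → ℕ} :
    f ∈ PosT NN i ↔ (∑ t, f t = NN ∧ ∀ t, 0 < f t) := by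
  simp [PosT, Finset.Nat.mem_antidiagonalTuple]

def toComp (NN i : ℕ) (f : Fin i → ℕ) (h1 : ∀ t, 0 < f t) (h2 : ∑ t, f t = NN) :
    Composition NN where
  blocks := List.ofFn f
  blocks_pos := by
    intro x hx
    rw [List.mem_ofFn] at hx
    obtain ⟨t, rfl⟩ := hx
    exact h1 t
  blocks_sum := by rw [List.sum_ofFn]; exact h2

lemma toComp_blocks (NN i : ℕ) (f : Fin i → ℕ) (h1 : ∀ t, 0 < f t) (h2 : ∑ t, f t = NN) :
    (toComp NN i f h1 h2).blocks = List.ofFn f := rfl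

lemma comp_card (NN : ℕ) (P : List ℕ → Prop) [DecidablePred P] :
    (Finset.univ.filter (fun c : Composition NN => P c.blocks)).card
      = ∑ i ∈ Finset.range (NN+1), ((PosT NN i).filter (fun f => P (List.ofFn f))).card := by
  classical
  rw [← Finset.card_sigma]
  refine Finset.card_bij'
    (fun (c : Composition NN) (_ : c ∈ Finset.univ.filter (fun c : Composition NN => P c.blocks))
      => (⟨c.length, c.blocksFun⟩ : Σ i, Fin i → ℕ))
    (fun p hp => toComp NN p.1 p.2
      (by
        have := (Finset.mem_sigma.mp hp).2
        rw [Finset.mem_filter, mem_PosT] at this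
        exact this.1.2)
      (by
        have := (Finset.mem_sigma.mp hp).2
        rw [Finset.mem_filter, mem_PosT] at this
        exact this.1.1)) ?_ ?_ ?_ ?_
  · intro c hc
    simp only [Finset.mem_filter, Finset.mem_univ, true_and] at hc
    simp only [Finset.mem_sigma, Finset.mem_filter, mem_PosT, Finset.mem_range]
    refine ⟨Nat.lt_succ_of_le c.length_le, ⟨c.sum_blocksFun, fun t => c.one_le_blocksFun t⟩, ?_⟩
    rw [Composition.ofFn_blocksFun]
    exact hc
  · intro p hp
    have := (Finset.mem_sigma.mp hp).2
    rw [Finset.mem_filter, mem_PosT] at this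
    simp only [Finset.mem_filter, Finset.mem_univ, true_and]
    exact this.2
  · intro c hc
    apply Composition.ext
    rw [toComp_blocks, Composition.ofFn_blocksFun]
  · intro p hp
    rcases p with ⟨i, f⟩
    have hlen : ∀ h1 h2, (toComp NN i f h1 h2).length = i := by
      intro h1 h2
      simp [toComp, Composition.length]
    refine Sigma.ext (hlen _ _) ?_
    simp only [Composition.blocksFun, toComp_blocks]
    refine (Fin.heq_fun_iff (k := (List.ofFn f).length) (l := i) (by simp)).mpr ?_
    intro t
    simp [List.get_ofFn]


lemma length_filter_ofFn {i : ℕ} (f : Fin i → ℕ) (p : ℕ → Prop) [DecidablePred p] :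
    ((List.ofFn f).filter (fun x => decide (p x))).length
      = (Finset.univ.filter (fun t => p (f t))).card := by
  induction i with
  | zero => simp
  | succ i ih =>
    rw [List.ofFn_succ, List.filter_cons, Finset.card_filter, Fin.sum_univ_succ,
      ← Finset.card_filter, ← ih (fun t => f t.succ)]
    by_cases h : p (f 0)
    · simp [h, Nat.add_comm]
    · simp [h]


lemma ie_core {i : ℕ} (S Big : Finset (Fin i)) :
    (∑ L ∈ S.powerset, (-1:ℤ)^L.card * (if Sᶜ ∪ L ⊆ Big then 1 else 0))
      = if Bigᶜ = S then 1 else 0 := by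
  classical
  by_cases hS : Sᶜ ⊆ Big
  · have h1 : ∀ L ∈ S.powerset,
        (-1:ℤ)^L.card * (if Sᶜ ∪ L ⊆ Big then 1 else 0)
          = if L ⊆ Big then (-1:ℤ)^L.card else 0 := by
      intro L _
      by_cases h : L ⊆ Big
      · rw [if_pos (Finset.union_subset hS h), if_pos h, mul_one]
      · rw [if_neg, mul_zero, if_neg h]
        intro hc
        exact h (Finset.Subset.trans Finset.subset_union_right hc)
    rw [Finset.sum_congr rfl h1, ← Finset.sum_filter]
    have h2 : S.powerset.filter (fun L => L ⊆ Big) = (S ∩ Big).powerset := by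
      ext L
      simp only [Finset.mem_filter, Finset.mem_powerset, Finset.subset_inter_iff]
    rw [h2, Finset.sum_powerset_neg_one_pow_card]
    congr 1
    apply propext
    constructor
    · intro h
      apply Finset.Subset.antisymm
      · intro x hx
        simp only [Finset.mem_compl] at hx
        by_contra hxS
        exact hx (hS (by simpa using hxS))
      · intro x hx
        simp only [Finset.mem_compl]
        intro hxB
        have : x ∈ S ∩ Big := Finset.mem_inter.mpr ⟨hx, hxB⟩
        rw [h] at this
        exact absurd this (Finset.notMem_empty x)
    · rintro rfl
      ext x
      simp
  · rw [if_neg, Finset.sum_eq_zero]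
    · intro L _
      rw [if_neg, mul_zero]
      intro h
      exact hS (Finset.Subset.trans Finset.subset_union_left h)
    · rintro rfl
      exact hS (by simp)

lemma step_b (k N m i : ℕ) (S : Finset (Fin i)) :
    (((PosT N i).filter (fun f => Finset.univ.filter (fun t => f t < k) = S)).card : ℤ)
      = ∑ L ∈ S.powerset, (-1:ℤ)^L.card *
          (((PosT N i).filter (fun f => ∀ t ∈ Sᶜ ∪ L, k ≤ f t)).card : ℤ) := by
  classical
  rw [Finset.card_filter, Nat.cast_sum]
  simp only [Nat.cast_ite, Nat.cast_one, Nat.cast_zero]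
  have h2 : ∀ L ∈ S.powerset, (-1:ℤ)^L.card *
        (((PosT N i).filter (fun f => ∀ t ∈ Sᶜ ∪ L, k ≤ f t)).card : ℤ)
      = ∑ f ∈ PosT N i, (-1:ℤ)^L.card * (if Sᶜ ∪ L ⊆ Finset.univ.filter (fun t => k ≤ f t) then 1 else 0) := by
    intro L _
    rw [Finset.card_filter, Nat.cast_sum, Finset.mul_sum]
    simp only [Nat.cast_ite, Nat.cast_one, Nat.cast_zero]
    apply Finset.sum_congr rfl
    intro f _
    congr 2
    apply propext
    constructor
    · intro h t ht
      simp only [Finset.mem_filter, Finset.mem_univ, true_and]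
      exact h t ht
    · intro h t ht
      have := h ht
      simp only [Finset.mem_filter] at this
      exact this.2
  rw [Finset.sum_congr rfl h2, Finset.sum_comm]
  apply Finset.sum_congr rfl
  intro f _
  rw [ie_core]
  congr 1
  apply propext
  have : (Finset.univ.filter (fun t => k ≤ f t))ᶜ = Finset.univ.filter (fun t => f t < k) := by
    ext t
    simp only [Finset.mem_compl, Finset.mem_filter, Finset.mem_univ, true_and, not_le]
  rw [this]

lemma key (k N m i : ℕ) (hk : 1 ≤ k) :
    (((PosT N i).filter
        (fun f => (Finset.univ.filter (fun t => f t < k)).card = m)).card : ℤ)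
      = (i.choose m : ℤ) * ∑ ℓ ∈ Finset.range (m+1), (-1:ℤ)^ℓ * (m.choose ℓ : ℤ) *
          (if i + (k-1)*((i-m) + ℓ) ≤ N
            then (Nat.multichoose i (N - (i + (k-1)*((i-m) + ℓ))) : ℤ) else 0) := by
  classical
  -- partition by the small set
  rw [Finset.card_eq_sum_card_fiberwise
    (f := fun f => Finset.univ.filter (fun t => f t < k))
    (t := Finset.powersetCard m Finset.univ)
    (fun f hf => by
      rw [Finset.mem_coe, Finset.mem_filter] at hf
      rw [Finset.mem_coe, Finset.mem_powersetCard]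
      exact ⟨Finset.subset_univ _, hf.2⟩)]
  rw [Nat.cast_sum]
  -- each fiber has the same value
  have hfiber : ∀ S ∈ Finset.powersetCard m Finset.univ,
      ((((PosT N i).filter (fun f => (Finset.univ.filter (fun t => f t < k)).card = m)).filter
          (fun f => Finset.univ.filter (fun t => f t < k) = S)).card : ℤ)
        = ∑ ℓ ∈ Finset.range (m+1), (-1:ℤ)^ℓ * (m.choose ℓ : ℤ) *
            (if i + (k-1)*((i-m) + ℓ) ≤ N
              then (Nat.multichoose i (N - (i + (k-1)*((i-m) + ℓ))) : ℤ) else 0) := by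
    intro S hS
    rw [Finset.mem_powersetCard] at hS
    obtain ⟨hSu, hScard⟩ := hS
    -- drop the redundant card filter
    have e1 : (((PosT N i).filter (fun f => (Finset.univ.filter (fun t => f t < k)).card = m)).filter
          (fun f => Finset.univ.filter (fun t => f t < k) = S))
        = (PosT N i).filter (fun f => Finset.univ.filter (fun t => f t < k) = S) := by
      rw [Finset.filter_filter]
      apply Finset.filter_congr
      intro f _
      constructor
      · rintro ⟨_, h2⟩; exact h2
      · rintro h2; exact ⟨by rw [h2, hScard], h2⟩
    rw [e1, step_b k N m i S]
    -- evaluate each inner count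
    have e2 : ∀ L ∈ S.powerset,
        (-1:ℤ)^L.card * (((PosT N i).filter (fun f => ∀ t ∈ Sᶜ ∪ L, k ≤ f t)).card : ℤ)
          = (-1:ℤ)^L.card *
            (if i + (k-1)*((i-m) + L.card) ≤ N
              then (Nat.multichoose i (N - (i + (k-1)*((i-m) + L.card))) : ℤ) else 0) := by
      intro L hL
      rw [Finset.mem_powerset] at hL
      congr 1
      have e3 : (PosT N i).filter (fun f => ∀ t ∈ Sᶜ ∪ L, k ≤ f t)
          = (Finset.Nat.antidiagonalTuple i N).filter
              (fun f => (∀ t, 0 < f t) ∧ ∀ t ∈ Sᶜ ∪ L, k ≤ f t) := by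
        rw [PosT, Finset.filter_filter]
      have e4 : (Sᶜ ∪ L).card = (i-m) + L.card := by
        rw [Finset.card_union_of_disjoint, Finset.card_compl]
        · simp [hScard]
        · exact Disjoint.mono_right hL (disjoint_compl_left)
      rw [e3, card_ge i N k hk (Sᶜ ∪ L), e4]
      split_ifs with h
      · norm_cast
      · rfl
    rw [Finset.sum_congr rfl e2]
    -- group by cardinality
    rw [Finset.sum_powerset]
    rw [hScard]
    apply Finset.sum_congr rfl
    intro ℓ hℓ
    have : ∀ L ∈ Finset.powersetCard ℓ S,
        (-1:ℤ)^L.card *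
            (if i + (k-1)*((i-m) + L.card) ≤ N
              then (Nat.multichoose i (N - (i + (k-1)*((i-m) + L.card))) : ℤ) else 0)
          = (-1:ℤ)^ℓ *
            (if i + (k-1)*((i-m) + ℓ) ≤ N
              then (Nat.multichoose i (N - (i + (k-1)*((i-m) + ℓ))) : ℤ) else 0) := by
      intro L hL
      rw [(Finset.mem_powersetCard.mp hL).2]
    rw [Finset.sum_congr rfl this, Finset.sum_const, Finset.card_powersetCard, hScard]
    rw [nsmul_eq_mul]
    push_cast
    ring
  rw [Finset.sum_congr rfl hfiber, Finset.sum_const, Finset.card_powersetCard]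
  rw [Finset.card_univ, Fintype.card_fin, nsmul_eq_mul]

/-- Number of odd-length (`parity = true`) resp. even-length compositions of `n+k-1` with
exactly `m` parts less than `k`. -/
noncomputable def countSmall (k n m : ℕ) (parity : Bool) : ℕ :=
  Nat.card {c : Composition (n + k - 1) //
    (c.blocks.filter (fun x => x < k)).length = m ∧
    (if parity then Odd c.length else Even c.length)}

lemma lhs_eq (k n m : ℕ) :
    (countSmall k n m true : ℤ) - countSmall k n m false
      = ∑ i ∈ Finset.range (n+k-1+1), (-1:ℤ)^(i+1) *
          (((PosT (n+k-1) i).filter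
            (fun f => (Finset.univ.filter (fun t => f t < k)).card = m)).card : ℤ) := by
  classical
  have hct : countSmall k n m true
      = (Finset.univ.filter (fun c : Composition (n+k-1) =>
          ((c.blocks.filter (fun x => x < k)).length = m ∧ Odd c.blocks.length))).card := by
    rw [countSmall, Nat.card_eq_fintype_card, Fintype.card_subtype]
    congr 1
  have hcf : countSmall k n m false
      = (Finset.univ.filter (fun c : Composition (n+k-1) =>
          ((c.blocks.filter (fun x => x < k)).length = m ∧ Even c.blocks.length))).card := by
    rw [countSmall, Nat.card_eq_fintype_card, Fintype.card_subtype]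
    congr 1
  rw [hct, hcf]
  rw [comp_card (n+k-1) (fun l => (l.filter (fun x => x < k)).length = m ∧ Odd l.length),
      comp_card (n+k-1) (fun l => (l.filter (fun x => x < k)).length = m ∧ Even l.length)]
  push_cast
  rw [← Finset.sum_sub_distrib]
  apply Finset.sum_congr rfl
  intro i _
  have hsmall : ∀ f : Fin i → ℕ,
      (((List.ofFn f).filter (fun x => x < k)).length = m)
        ↔ ((Finset.univ.filter (fun t => f t < k)).card = m) := by
    intro f
    rw [length_filter_ofFn f (fun x => x < k)]
  rcases Nat.even_or_odd i with he | ho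
  · -- i even : odd-filter empty
    have h1 : ((PosT (n+k-1) i).filter
        (fun f => ((List.ofFn f).filter (fun x => x < k)).length = m ∧ Odd (List.ofFn f).length)) = ∅ := by
      rw [Finset.filter_eq_empty_iff]
      intro f _
      rw [List.length_ofFn]
      rintro ⟨-, hodd⟩
      exact (Nat.not_even_iff_odd.mpr hodd) he
    have h2 : ((PosT (n+k-1) i).filter
        (fun f => ((List.ofFn f).filter (fun x => x < k)).length = m ∧ Even (List.ofFn f).length))
        = ((PosT (n+k-1) i).filter
            (fun f => (Finset.univ.filter (fun t => f t < k)).card = m)) := by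
      apply Finset.filter_congr
      intro f _
      rw [List.length_ofFn, hsmall f]
      simp [he]
    rw [h1, h2, (Even.add_one he).neg_one_pow]
    simp
  · have h1 : ((PosT (n+k-1) i).filter
        (fun f => ((List.ofFn f).filter (fun x => x < k)).length = m ∧ Even (List.ofFn f).length)) = ∅ := by
      rw [Finset.filter_eq_empty_iff]
      intro f _
      rw [List.length_ofFn]
      rintro ⟨-, heven⟩
      exact (Nat.not_even_iff_odd.mpr ho) heven
    have h2 : ((PosT (n+k-1) i).filter
        (fun f => ((List.ofFn f).filter (fun x => x < k)).length = m ∧ Odd (List.ofFn f).length))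
        = ((PosT (n+k-1) i).filter
            (fun f => (Finset.univ.filter (fun t => f t < k)).card = m)) := by
      apply Finset.filter_congr
      intro f _
      rw [List.length_ofFn, hsmall f]
      simp [ho]
    rw [h1, h2, (Odd.add_one ho).neg_one_pow]
    simp

lemma inner_j (k n m i ℓ : ℕ) (hk : 1 ≤ k) :
    (∑ j ∈ Finset.range (n + k*(m+1) + 1),
      (if ((i:ℤ) + j + ((k:ℤ)-1)*((ℓ:ℤ)+i-m-1) = n) then
        (-1:ℤ)^(i+ℓ+1) * ((i+j-1).choose j : ℤ) * (i.choose m : ℤ) * (m.choose ℓ : ℤ)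
       else 0))
    = (-1:ℤ)^(i+1) * (i.choose m : ℤ) * ((-1:ℤ)^ℓ * (m.choose ℓ : ℤ) *
        (if i + (k-1)*((i-m) + ℓ) ≤ n+k-1
          then (Nat.multichoose i ((n+k-1) - (i + (k-1)*((i-m)+ℓ))) : ℤ) else 0)) := by
  by_cases him : m ≤ i
  · have hKcast : (((k-1)*((i-m)+ℓ) : ℕ) : ℤ)
        = ((k:ℤ)-1)*((ℓ:ℤ)+i-m-1) + ((k:ℤ)-1) := by
      push_cast [Nat.cast_sub him, Nat.cast_sub hk]
      ring
    have hNcast : (((n+k-1) : ℕ) : ℤ) = (n:ℤ) + k - 1 := by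
      push_cast [Nat.cast_sub (by omega : 1 ≤ n + k)]
      ring
    by_cases hc : i + (k-1)*((i-m)+ℓ) ≤ n+k-1
    · set j0 := (n+k-1) - (i + (k-1)*((i-m)+ℓ)) with hj0def
      have hj0 : (j0:ℤ) = (n:ℤ) - i - ((k:ℤ)-1)*((ℓ:ℤ)+i-m-1) := by
        rw [hj0def, Nat.cast_sub hc, hNcast]
        push_cast [hKcast]
        ring
      have hmem : j0 ∈ Finset.range (n + k*(m+1) + 1) := by
        rw [Finset.mem_range]
        have h1 : j0 ≤ n + k - 1 := Nat.sub_le _ _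
        have h2 : k ≤ k * (m+1) := Nat.le_mul_of_pos_right k (by omega)
        omega
      have hiff : ∀ j : ℕ, ((i:ℤ) + j + ((k:ℤ)-1)*((ℓ:ℤ)+i-m-1) = n) ↔ j = j0 := by
        intro j
        rw [← Nat.cast_inj (R := ℤ), hj0]
        constructor <;> intro h <;> linarith
      rw [Finset.sum_congr rfl (fun j _ => if_congr (hiff j) rfl rfl),
        Finset.sum_ite_eq' _ j0, if_pos hmem, if_pos hc, Nat.multichoose_eq]
      have : i + ℓ + 1 = (i + 1) + ℓ := by ring
      rw [this, pow_add]
      ring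
    · rw [if_neg hc, Finset.sum_eq_zero]
      · ring
      · intro j _
        rw [if_neg]
        intro h
        apply hc
        have hj : (0:ℤ) ≤ j := Int.natCast_nonneg j
        rw [← Nat.cast_le (α := ℤ), Nat.cast_add, hKcast, hNcast]
        linarith
  · have h0 : i.choose m = 0 := Nat.choose_eq_zero_of_lt (Nat.lt_of_not_le him)
    rw [h0, Finset.sum_eq_zero]
    · push_cast
      ring
    · intro j _
      split_ifs <;> push_cast <;> ring

/-- `b̄_{k,n}^{(m)} = Σ (-1)^{i+ℓ+1} C(i+j-1,j) C(i,m) C(m,ℓ)` summed over nonnegative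
`i, j, ℓ` with `i + j + (k-1)(ℓ + i - m - 1) = n` (an equation over `ℤ`).  Indices with
`ℓ > m` or `i < m` contribute zero, so the finite ranges below cover all nonzero terms. -/
theorem signed_small_parts_count (k n m : ℕ) (hk : 1 ≤ k) (hn : 1 ≤ n) :
    (countSmall k n m true : ℤ) - countSmall k n m false =
      ∑ q ∈ ((Finset.range (n + k * (m + 1) + 1) ×ˢ Finset.range (n + k * (m + 1) + 1)) ×ˢ
              Finset.range (m + 1)).filter
          (fun q : (ℕ × ℕ) × ℕ =>
            (q.1.1 : ℤ) + q.1.2 + ((k : ℤ) - 1) * ((q.2 : ℤ) + q.1.1 - m - 1) = n),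
        (-1) ^ (q.1.1 + q.2 + 1) * ((q.1.1 + q.1.2 - 1).choose q.1.2 : ℤ) *
          (q.1.1.choose m : ℤ) * (m.choose q.2 : ℤ) := by
  classical
  rw [lhs_eq]
  have hkm : k ≤ k * (m+1) := Nat.le_mul_of_pos_right k (by omega)
  have hsub : Finset.range (n+k-1+1) ⊆ Finset.range (n+k*(m+1)+1) :=
    Finset.range_subset_range.mpr (by omega)
  rw [Finset.sum_subset hsub (by
    intro i hi hni
    rw [Finset.mem_range] at hi
    rw [Finset.mem_range, not_lt] at hni
    have hempty : ((PosT (n+k-1) i).filter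
        (fun f => (Finset.univ.filter (fun t => f t < k)).card = m)) = ∅ := by
      rw [Finset.filter_eq_empty_iff]
      intro f hf
      rw [mem_PosT] at hf
      have hle : i ≤ n + k - 1 := by
        have := Finset.card_nsmul_le_sum Finset.univ f 1 (fun t _ => hf.2 t)
        simpa [hf.1] using this
      omega
    rw [hempty]
    simp)]
  rw [Finset.sum_filter, Finset.sum_product, Finset.sum_product]
  apply Finset.sum_congr rfl
  intro i _
  rw [Finset.sum_comm]
  rw [Finset.sum_congr rfl (fun ℓ _ => inner_j k n m i ℓ hk)]
  rw [← Finset.mul_sum, key k (n+k-1) m i hk]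
  ring
end

section
/- For integers k ≥ 1 and n ≥ 1, the generating function identity Σ_{n≥1} a_{k,n} x^{n+k-1} = x^k/(1 − x − x^k) holds, where a_{k,n} is the number of compositions of n+k-1 with all parts at least k; equivalently a_{k,n} = Σ_{0 ≤ j ≤ (n-1)/k} C(n-1-j(k-1), j). -/
open PowerSeries

/-- The number of compositions of `n+k-1` with all parts at least `k`. -/
noncomputable def a (k n : ℕ) : ℕ :=
  Nat.card {c : Composition (n + k - 1) // ∀ x ∈ c.blocks, k ≤ x}

/-- Lists of naturals with sum `m`, all entries at least `k`. -/
abbrev LK (k m : ℕ) := {l : List ℕ // l.sum = m ∧ ∀ x ∈ l, k ≤ x}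

noncomputable def bb (k m : ℕ) : ℕ := Nat.card (LK k m)

def lkEquiv (k m : ℕ) (hk : 1 ≤ k) :
    LK k m ≃ {c : Composition m // ∀ x ∈ c.blocks, k ≤ x} where
  toFun l := ⟨⟨l.1, fun hi => lt_of_lt_of_le hk (l.2.2 _ hi), l.2.1⟩, l.2.2⟩
  invFun c := ⟨c.1.blocks, c.1.blocks_sum, c.2⟩
  left_inv l := rfl
  right_inv c := rfl

lemma finite_lk (k m : ℕ) (hk : 1 ≤ k) : Finite (LK k m) :=
  (lkEquiv k m hk).finite_iff.mpr inferInstance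

lemma a_eq_bb (k n : ℕ) (hk : 1 ≤ k) : a k n = bb k (n + k - 1) :=
  (Nat.card_congr (lkEquiv k (n + k - 1) hk)).symm

lemma bb_zero (k : ℕ) (hk : 1 ≤ k) : bb k 0 = 1 := by
  have : Unique (LK k 0) := by
    refine ⟨⟨⟨[], rfl, by simp⟩⟩, ?_⟩
    rintro ⟨l, hs, hg⟩
    have hl : l = [] := by
      cases l with
      | nil => rfl
      | cons x t =>
        exfalso
        have hx := hg x (by simp)
        have : x = 0 := by
          have := List.sum_eq_zero_iff.mp hs x (by simp)
          exact this
        omega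
    subst hl; rfl
  exact Nat.card_unique

lemma bb_lt (k m : ℕ) (h1 : 1 ≤ m) (h2 : m < k) : bb k m = 0 := by
  have : IsEmpty (LK k m) := by
    constructor
    rintro ⟨l, hs, hg⟩
    cases l with
    | nil => simp at hs; omega
    | cons x t =>
      have hx := hg x (by simp)
      have : x ≤ m := by
        have : x ≤ (x :: t).sum := by simp [List.sum_cons]
        omega
      omega
  simp [bb, Nat.card_of_isEmpty]

lemma bb_self (k : ℕ) (hk : 1 ≤ k) : bb k k = 1 := by
  have : Unique (LK k k) := by
    refine ⟨⟨⟨[k], by simp, by simp⟩⟩, ?_⟩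
    rintro ⟨l, hs, hg⟩
    have hl : l = [k] := by
      cases l with
      | nil => simp at hs; omega
      | cons x t =>
        have hx := hg x (by simp)
        simp [List.sum_cons] at hs
        have hxk : x = k := by
          have : x ≤ k := by omega
          omega
        subst hxk
        have hts : t.sum = 0 := by omega
        have ht : t = [] := by
          cases t with
          | nil => rfl
          | cons y u =>
            have hy := hg y (by simp)
            have := List.sum_eq_zero_iff.mp hts y (by simp)
            omega
        simp [ht]
    simp [hl]
  exact Nat.card_unique

/-- increment the head of a list -/
def incr : List ℕ → List ℕ
  | [] => []
  | x :: t => (x + 1) :: t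

def lkF (k m : ℕ) (hk : 1 ≤ k) (hm : k + 1 ≤ m) :
    LK k (m - 1) ⊕ LK k (m - k) → LK k m := fun z =>
  match z with
  | Sum.inl ⟨l, hs, hg⟩ => ⟨incr l, by
      cases l with
      | nil => simp at hs; omega
      | cons x t => simp [incr, List.sum_cons] at hs ⊢; omega, by
      cases l with
      | nil => simp at hs; omega
      | cons x t =>
        intro y hy
        simp [incr] at hy
        rcases hy with rfl | hy
        · have := hg x (by simp); omega
        · exact hg y (by simp [hy])⟩
  | Sum.inr ⟨t, hs, hg⟩ => ⟨k :: t, by simp [List.sum_cons, hs]; omega, by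
      intro y hy
      simp at hy
      rcases hy with rfl | hy
      · exact le_refl _
      · exact hg y hy⟩

lemma lkF_bij (k m : ℕ) (hk : 1 ≤ k) (hm : k + 1 ≤ m) :
    Function.Bijective (lkF k m hk hm) := by
  constructor
  · rintro (⟨l, hs, hg⟩ | ⟨t, hs, hg⟩) (⟨l', hs', hg'⟩ | ⟨t', hs', hg'⟩) h <;>
      simp only [lkF, Subtype.mk.injEq] at h
    · cases l with
      | nil => simp at hs; omega
      | cons x u =>
        cases l' with
        | nil => simp at hs'; omega
        | cons x' u' =>
          simp [incr] at h
          simp [h.1, h.2]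
    · exfalso
      cases l with
      | nil => simp at hs; omega
      | cons x u =>
        simp [incr] at h
        have := hg x (by simp)
        omega
    · exfalso
      cases l' with
      | nil => simp at hs'; omega
      | cons x u =>
        simp [incr] at h
        have := hg' x (by simp)
        omega
    · simpa using h
  · rintro ⟨l, hs, hg⟩
    cases l with
    | nil => simp at hs; omega
    | cons x t =>
      have hx := hg x (by simp)
      simp [List.sum_cons] at hs
      by_cases hxk : x = k
      · refine ⟨Sum.inr ⟨t, by omega, fun y hy => hg y (by simp [hy])⟩, ?_⟩
        simp only [lkF]
        congr 1
        simp [hxk]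
      · refine ⟨Sum.inl ⟨(x - 1) :: t, by simp [List.sum_cons]; omega, ?_⟩, ?_⟩
        · intro y hy
          simp at hy
          rcases hy with rfl | hy
          · omega
          · exact hg y (by simp [hy])
        · simp only [lkF, incr]
          congr 1
          simp
          omega

lemma bb_rec (k m : ℕ) (hk : 1 ≤ k) (hm : k + 1 ≤ m) :
    bb k m = bb k (m - 1) + bb k (m - k) := by
  haveI := finite_lk k (m-1) hk
  haveI := finite_lk k (m-k) hk
  haveI := finite_lk k m hk
  have h := Nat.card_congr (Equiv.ofBijective _ (lkF_bij k m hk hm))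
  rw [Nat.card_sum] at h
  unfold bb
  omega

/-- the full-range binomial sum -/
def tt (k N : ℕ) : ℕ := ∑ j ∈ Finset.range (N + 1), (N - j * (k - 1)).choose j

lemma choose_term_zero (k N j : ℕ) (h : N < j * k) : (N - j * (k - 1)).choose j = 0 := by
  apply Nat.choose_eq_zero_of_lt
  rcases Nat.eq_zero_or_pos j with rfl | hj
  · simp at h
  · cases k with
    | zero => simp at h
    | succ k' =>
      have hmul : j * (k' + 1) = j * k' + j := by ring
      simp only [Nat.add_sub_cancel]
      omega

lemma tt_zero (k : ℕ) : tt k 0 = 1 := by simp [tt]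

lemma tt_small (k N : ℕ) (h : N < k) : tt k N = 1 := by
  unfold tt
  rw [Finset.sum_range_succ']
  have : ∀ i ∈ Finset.range N, (N - (i + 1) * (k - 1)).choose (i + 1) = 0 := by
    intro i _
    exact choose_term_zero k N (i + 1) (by nlinarith)
  rw [Finset.sum_congr rfl this]
  simp

lemma tt_rec (k N : ℕ) (hk : 1 ≤ k) (hN : 1 ≤ N) (hkN : k ≤ N) :
    tt k N = tt k (N - 1) + tt k (N - k) := by
  -- extend t(N-1) to range (N+1)
  have h1 : tt k (N - 1) = ∑ j ∈ Finset.range (N + 1), (N - 1 - j * (k - 1)).choose j := by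
    unfold tt
    have hNN : N - 1 + 1 = N := by omega
    rw [hNN]
    rw [Finset.sum_range_succ]
    have : (N - 1 - N * (k - 1)).choose N = 0 := by
      apply choose_term_zero
      nlinarith
    rw [this, add_zero]
  -- extend and reindex t(N-k)
  have h2 : tt k (N - k) = ∑ i ∈ Finset.range N, (N - k - i * (k - 1)).choose i := by
    unfold tt
    apply Finset.sum_subset
    · apply Finset.range_subset_range.mpr; omega
    · intro i _ hi
      simp at hi
      apply choose_term_zero
      nlinarith
  rw [h1, h2]
  unfold tt
  rw [Finset.sum_range_succ' (fun j => (N - j * (k - 1)).choose j),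
      Finset.sum_range_succ' (fun j => (N - 1 - j * (k - 1)).choose j)]
  simp only [Nat.zero_mul, Nat.sub_zero, Nat.choose_zero_right]
  have key : ∀ i ∈ Finset.range N,
      (N - (i + 1) * (k - 1)).choose (i + 1) =
      (N - 1 - (i + 1) * (k - 1)).choose (i + 1) + (N - k - i * (k - 1)).choose i := by
    intro i _
    set X := (i + 1) * (k - 1) with hX
    have hsplit : X = i * (k - 1) + (k - 1) := by rw [hX]; ring
    have hX2 : N - k - i * (k - 1) = N - X - 1 := by omega
    have hX3 : N - 1 - X = N - X - 1 := by omega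
    rw [hX2, hX3]
    by_cases hNX : 1 ≤ N - X
    · have hgoal : (N - X - 1) + 1 = N - X := by omega
      calc (N - X).choose (i + 1) = ((N - X - 1) + 1).choose (i + 1) := by rw [hgoal]
        _ = (N - X - 1).choose i + (N - X - 1).choose (i + 1) := Nat.choose_succ_succ _ _
        _ = (N - X - 1).choose (i + 1) + (N - X - 1).choose i := by omega
    · have hx0 : N - X = 0 := by omega
      rw [hx0]
      simp
      have hi1 : 1 ≤ i := by
        by_contra hi
        push_neg at hi
        interval_cases i
        simp [hsplit] at hx0
        omega
      exact (Nat.choose_eq_zero_of_lt (by omega)).symm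
  rw [Finset.sum_congr rfl key, Finset.sum_add_distrib]
  omega

lemma a_one (k : ℕ) (hk : 1 ≤ k) : a k 1 = 1 := by
  rw [a_eq_bb k 1 hk]
  have : 1 + k - 1 = k := by omega
  rw [this, bb_self k hk]

lemma a_rec (k n : ℕ) (hk : 1 ≤ k) (hn : 2 ≤ n) :
    a k n = a k (n - 1) + (if k ≤ n - 1 then a k (n - k) else 0) := by
  rw [a_eq_bb k n hk, bb_rec k (n + k - 1) hk (by omega)]
  have e1 : n + k - 1 - 1 = (n - 1) + k - 1 := by omega
  rw [e1, ← a_eq_bb k (n - 1) hk]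
  congr 1
  have e2 : n + k - 1 - k = n - 1 := by omega
  rw [e2]
  by_cases h : k ≤ n - 1
  · rw [if_pos h]
    have e3 : n - 1 = (n - k) + k - 1 := by omega
    rw [e3, ← a_eq_bb k (n - k) hk]
  · rw [if_neg h]
    exact bb_lt k (n - 1) (by omega) (by omega)

lemma a_eq_tt (k : ℕ) (hk : 1 ≤ k) : ∀ n, 1 ≤ n → a k n = tt k (n - 1) := by
  intro n
  induction n using Nat.strong_induction_on with
  | _ n ih =>
    intro hn
    rcases eq_or_lt_of_le hn with h1 | h2
    · rw [← h1, a_one k hk]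
      simp [tt_zero]
    · have hn2 : 2 ≤ n := h2
      rw [a_rec k n hk hn2]
      by_cases h : k ≤ n - 1
      · rw [if_pos h, tt_rec k (n - 1) hk (by omega) h]
        have e1 : n - 1 - 1 = n - 1 - 1 := rfl
        rw [ih (n - 1) (by omega) (by omega), ih (n - k) (by omega) (by omega)]
        congr 2
        omega
      · rw [if_neg h, add_zero, ih (n - 1) (by omega) (by omega)]
        rw [tt_small k (n - 1 - 1) (by omega), tt_small k (n - 1) (by omega)]

lemma a_eq_sum (k : ℕ) (hk : 1 ≤ k) (n : ℕ) (hn : 1 ≤ n) :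
    a k n = ∑ j ∈ Finset.range ((n - 1) / k + 1), (n - 1 - j * (k - 1)).choose j := by
  rw [a_eq_tt k hk n hn]
  unfold tt
  symm
  apply Finset.sum_subset
  · apply Finset.range_subset_range.mpr
    have := Nat.div_le_self (n - 1) k
    omega
  · intro j _ hj
    simp at hj
    apply choose_term_zero
    exact (Nat.div_lt_iff_lt_mul (show 0 < k by omega)).mp (by omega : (n - 1) / k < j)

noncomputable def FF (k : ℕ) : PowerSeries ℚ := PowerSeries.mk fun m => (bb k m : ℚ)

lemma key_mul (k : ℕ) (hk : 1 ≤ k) : (1 - X - X ^ k) * (FF k) = 1 - X := by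
  ext N
  rw [sub_mul, sub_mul, one_mul]
  simp only [map_sub, PowerSeries.coeff_X_pow_mul' (FF k) k N]
  have hXmul : (coeff (R := ℚ) N) (X * FF k) = if 1 ≤ N then ((bb k (N - 1) : ℚ)) else 0 := by
    have : (X : PowerSeries ℚ) = X ^ 1 := (pow_one _).symm
    rw [this, PowerSeries.coeff_X_pow_mul' (FF k) 1 N]
    simp [FF]
  rw [hXmul]
  simp only [FF, PowerSeries.coeff_mk, PowerSeries.coeff_one, PowerSeries.coeff_X]
  by_cases h0 : N = 0
  · subst h0
    simp [bb_zero k hk]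
    omega
  · by_cases h1 : N = 1
    · subst h1
      simp
      by_cases hk1 : k = 1
      · subst hk1
        simp [bb_self 1 le_rfl, bb_zero 1 le_rfl]
      · rw [if_neg (by omega), bb_lt k 1 le_rfl (by omega)]
        simp [bb_zero k hk]
    · -- N ≥ 2
      rw [if_neg h0, if_neg h1, if_pos (by omega : 1 ≤ N), sub_zero]
      by_cases hkN : k ≤ N
      · rw [if_pos hkN]
        rcases eq_or_lt_of_le hkN with he | hlt
        · -- N = k ≥ 2
          subst he
          rw [bb_self k hk, Nat.sub_self, bb_zero k hk, bb_lt k (k - 1) (by omega) (by omega)]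
          norm_num
        · -- N ≥ k + 1
          rw [bb_rec k N hk (by omega)]
          push_cast
          ring
      · rw [if_neg hkN]
        rw [bb_lt k N (by omega) (by omega), bb_lt k (N - 1) (by omega) (by omega)]
        norm_num

lemma inv_eq (k : ℕ) (hk : 1 ≤ k) : X ^ k * (1 - X - X ^ k)⁻¹ = FF k - 1 := by
  have hu : constantCoeff (R := ℚ) (1 - X - X ^ k) ≠ 0 := by
    have : constantCoeff (R := ℚ) (1 - X - X ^ k) = 1 := by
      simp [map_sub, map_pow, PowerSeries.constantCoeff_X,
        zero_pow (by omega : k ≠ 0)]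
    rw [this]; norm_num
  have hcancel := PowerSeries.mul_inv_cancel _ hu
  have h2 : (FF k - 1) * (1 - X - X ^ k) = X ^ k := by
    rw [sub_mul, one_mul, mul_comm, key_mul k hk]; ring
  calc X ^ k * (1 - X - X ^ k)⁻¹
      = (FF k - 1) * (1 - X - X ^ k) * (1 - X - X ^ k)⁻¹ := by rw [h2]
    _ = (FF k - 1) * ((1 - X - X ^ k) * (1 - X - X ^ k)⁻¹) := by ring
    _ = FF k - 1 := by rw [hcancel, mul_one]

lemma coeff_sum_eq (k : ℕ) (hk : 1 ≤ k) (N : ℕ) :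
    (PowerSeries.coeff (R := ℚ) N) (∑ n ∈ Finset.Icc 1 (N + 1),
        ((a k n : ℚ) • (X ^ (n + k - 1)) : PowerSeries ℚ)) =
      (PowerSeries.coeff (R := ℚ) N) (X ^ k * (1 - X - X ^ k)⁻¹) := by
  rw [inv_eq k hk, map_sum, map_sub, PowerSeries.coeff_one]
  simp only [map_smul, PowerSeries.coeff_X_pow, smul_eq_mul, FF, PowerSeries.coeff_mk]
  by_cases hkN : k ≤ N
  · rw [Finset.sum_eq_single (N - k + 1)]
    · rw [if_pos (by omega), mul_one, a_eq_bb k _ hk]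
      have e : N - k + 1 + k - 1 = N := by omega
      rw [e, if_neg (by omega), sub_zero]
    · intro b hb hne
      simp only [Finset.mem_Icc] at hb
      rw [if_neg (by omega), mul_zero]
    · intro h
      exfalso
      exact h (Finset.mem_Icc.mpr (by omega))
  · rw [Finset.sum_eq_zero]
    · by_cases h0 : N = 0
      · subst h0; rw [if_pos rfl, bb_zero k hk]; norm_num
      · rw [if_neg h0, bb_lt k N (by omega) (by omega)]; norm_num
    · intro n hn
      simp only [Finset.mem_Icc] at hn
      rw [if_neg (by omega), mul_zero]

/-- `Σ_{n≥1} a_{k,n} x^{n+k-1} = x^k/(1 − x − x^k)` (the infinite sum is expressed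
coefficientwise: terms with `n + k - 1 > N` do not affect the `N`-th coefficient), and
`a_{k,n} = Σ_{0 ≤ j ≤ (n-1)/k} C(n-1-j(k-1), j)`. -/
theorem compositions_ge_k_generating_function (k : ℕ) (hk : 1 ≤ k) :
    (∀ N : ℕ,
      (PowerSeries.coeff (R := ℚ) N) (∑ n ∈ Finset.Icc 1 (N + 1),
          ((a k n : ℚ) • (X ^ (n + k - 1)) : PowerSeries ℚ)) =
        (PowerSeries.coeff (R := ℚ) N) (X ^ k * (1 - X - X ^ k)⁻¹)) ∧
    (∀ n : ℕ, 1 ≤ n →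
      a k n = ∑ j ∈ Finset.range ((n - 1) / k + 1), (n - 1 - j * (k - 1)).choose j) := by
  exact ⟨coeff_sum_eq k hk, a_eq_sum k hk⟩
end
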